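/- arXiv:1106.2125 — 7 statements merged into one kernel-verified Lean document; each statement's English description precedes it below -/
import Mathlib

section
/- Under the r-fold crossed random effects model, the variance of the sample mean equals (1/N)·∑_{u⊆[r], u≠∅} ν_u σ²_u, where ν_u = (1/N)∑_i Z_i N_{i,u}. -/
/-!
Centering gives `X̄ - μ = (1/N) ∑_{u ≠ ∅} Y_u` with `Y_u = ∑_i Z_i ε_{i,u}`. Effects with
different `u` are uncorrelated, so `E(∑_u Y_u)² = ∑_u E(Y_u²)`, and expanding `Y_u²` leaves
`σ²_u` times the number of pairs `(i, i')` of sampled cells that agree on `u`, which is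
`∑_i Z_i N_{i,u} = N ν_u`.
-/

open Finset

section LinearFunctional

variable {Ω R : Type*} [CommRing R] (E : (Ω → R) →ₗ[R] R)

theorem map_sum_mul_sum {ι κ : Type*} (s : Finset ι) (t : Finset κ) (f : ι → Ω → R)
    (g : κ → Ω → R) :
    E (fun ω => (∑ i ∈ s, f i ω) * ∑ j ∈ t, g j ω)
      = ∑ i ∈ s, ∑ j ∈ t, E (fun ω => f i ω * g j ω) := by
  have hexpand : (fun ω => (∑ i ∈ s, f i ω) * ∑ j ∈ t, g j ω)
      = ∑ i ∈ s, ∑ j ∈ t, fun ω => f i ω * g j ω := by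
    funext ω
    simp [sum_mul_sum]
  simp only [hexpand, map_sum]

theorem map_sum_sq_of_orthogonal {ι : Type*} (s : Finset ι) (Y : ι → Ω → R)
    (horth : ∀ u ∈ s, ∀ v ∈ s, u ≠ v → E (fun ω => Y u ω * Y v ω) = 0) :
    E (fun ω => (∑ u ∈ s, Y u ω) ^ 2) = ∑ u ∈ s, E (fun ω => Y u ω ^ 2) := by
  simp only [sq, map_sum_mul_sum]
  refine sum_congr rfl fun u hu => ?_
  rw [sum_eq_single_of_mem u hu fun v hv huv => horth u hu v hv (Ne.symm huv)]

end LinearFunctional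

theorem finsum_mul_eq_sum_toFinset {α M : Type*} [NonUnitalNonAssocSemiring M]
    {Z : α → M} (hZ : (Function.support Z).Finite) (g : α → M) :
    ∑ᶠ i, Z i * g i = ∑ i ∈ hZ.toFinset, Z i * g i :=
  finsum_eq_sum_of_support_subset _ <| (Function.support_mul_subset_left Z g).trans (by simp)

theorem map_sq_sum_crossed_effects {Ω ι κ : Type*} [DecidableEq κ]
    (E : (Ω → ℝ) →ₗ[ℝ] ℝ) (U : Finset κ) (S : Finset ι) (w : ι → ℝ) (σ2 : κ → ℝ)
    (ε : ι → κ → Ω → ℝ) (agree : κ → ι → ι → Prop) [∀ u i i', Decidable (agree u i i')]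
    (hcov : ∀ i i', ∀ u ∈ U, ∀ u' ∈ U,
      E (fun ω => ε i u ω * ε i' u' ω)
        = σ2 u * (if u = u' ∧ agree u i i' then (1 : ℝ) else 0)) :
    E (fun ω => (∑ u ∈ U, ∑ i ∈ S, w i * ε i u ω) ^ 2)
      = ∑ u ∈ U, σ2 u * ∑ i ∈ S, ∑ i' ∈ S, w i * w i' * (if agree u i i' then 1 else 0) := by
  have hproduct : ∀ u ∈ U, ∀ u' ∈ U,
      E (fun ω => (∑ i ∈ S, w i * ε i u ω) * ∑ i' ∈ S, w i' * ε i' u' ω)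
        = σ2 u * ∑ i ∈ S, ∑ i' ∈ S,
            w i * w i' * (if u = u' ∧ agree u i i' then 1 else 0) := by
    intro u hu u' hu'
    rw [map_sum_mul_sum, mul_sum]
    refine sum_congr rfl fun i _ => ?_
    rw [mul_sum]
    refine sum_congr rfl fun i' _ => ?_
    have hfun : (fun ω => w i * ε i u ω * (w i' * ε i' u' ω))
        = (w i * w i') • fun ω => ε i u ω * ε i' u' ω := by
      funext ω
      simp only [Pi.smul_apply, smul_eq_mul]
      ring
    rw [hfun, map_smul, hcov i i' u hu u' hu', smul_eq_mul]
    ring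
  rw [map_sum_sq_of_orthogonal]
  · refine sum_congr rfl fun u hu => ?_
    simp [sq, hproduct u hu u hu]
  · intro u hu v hv huv
    simp [hproduct u hu v hv, huv]

theorem stmt0_general {r : ℕ} {Ω : Type*}
    (E : (Ω → ℝ) →ₗ[ℝ] ℝ)
    (Z : (Fin r → ℕ) → ℝ)
    (hZfin : (Function.support Z).Finite)
    (N : ℝ) (hN : N = ∑ᶠ i, Z i) (hNpos : 0 < N)
    (μ : ℝ) (σ2 : Finset (Fin r) → ℝ)
    (ε : (Fin r → ℕ) → Finset (Fin r) → Ω → ℝ)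
    (hcov : ∀ i i' u u', u.Nonempty → u'.Nonempty →
      E (fun ω => ε i u ω * ε i' u' ω)
        = σ2 u * (if u = u' ∧ ∀ j ∈ u, i j = i' j then (1 : ℝ) else 0))
    (X : (Fin r → ℕ) → Ω → ℝ)
    (hX : ∀ i ω, X i ω = μ + ∑ u ∈ Finset.univ.erase (∅ : Finset (Fin r)), ε i u ω)
    (Nmatch : (Fin r → ℕ) → Finset (Fin r) → ℝ)
    (hNmatch : ∀ i u, Nmatch i u
      = ∑ᶠ i', Z i' * (if ∀ j ∈ u, i j = i' j then (1 : ℝ) else 0))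
    (ν : Finset (Fin r) → ℝ)
    (hν : ∀ u, ν u = (1 / N) * ∑ᶠ i, Z i * Nmatch i u)
    (Xbar : Ω → ℝ)
    (hXbar : ∀ ω, Xbar ω = (1 / N) * ∑ᶠ i, Z i * X i ω) :
    E (fun ω => (Xbar ω - μ) ^ 2)
      = (1 / N) * ∑ u ∈ Finset.univ.erase (∅ : Finset (Fin r)), ν u * σ2 u := by
  classical
  set S := hZfin.toFinset
  set U := univ.erase (∅ : Finset (Fin r))
  have hNS : ∑ i ∈ S, Z i = N := by rw [hN, finsum_eq_sum _ hZfin]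
  have hcentered : ∀ ω, Xbar ω - μ = (1 / N) * ∑ u ∈ U, ∑ i ∈ S, Z i * ε i u ω := by
    intro ω
    have hsum : ∑ i ∈ S, Z i * X i ω = N * μ + ∑ u ∈ U, ∑ i ∈ S, Z i * ε i u ω := by
      simp only [hX, mul_add, mul_sum, sum_add_distrib, ← sum_mul, hNS]
      rw [sum_comm]
    rw [hXbar, finsum_mul_eq_sum_toFinset hZfin, hsum]
    field_simp
    ring
  have hν' : ∀ u, ν u = (1 / N) * ∑ i ∈ S, ∑ i' ∈ S,
      Z i * Z i' * (if ∀ j ∈ u, i j = i' j then 1 else 0) := by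
    intro u
    rw [hν, finsum_mul_eq_sum_toFinset hZfin]
    simp only [hNmatch, finsum_mul_eq_sum_toFinset hZfin, mul_sum, mul_assoc, S]
  have hcovU : ∀ i i', ∀ u ∈ U, ∀ u' ∈ U, _ := fun i i' u hu u' hu' =>
    hcov i i' u u' (nonempty_iff_ne_empty.2 (ne_of_mem_erase hu))
      (nonempty_iff_ne_empty.2 (ne_of_mem_erase hu'))
  calc E (fun ω => (Xbar ω - μ) ^ 2)
      = (1 / N) ^ 2 * E (fun ω => (∑ u ∈ U, ∑ i ∈ S, Z i * ε i u ω) ^ 2) := by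
        rw [← smul_eq_mul, ← map_smul]
        congr 1
        funext ω
        simp [hcentered, mul_pow]
    _ = (1 / N) * ∑ u ∈ U, ν u * σ2 u := by
        rw [map_sq_sum_crossed_effects E U S Z σ2 ε _ hcovU, mul_sum, mul_sum]
        refine sum_congr rfl fun u _ => ?_
        rw [hν']
        ring

/-- Theorem 1 (random effects variance of the sample mean):
under the `r`-fold crossed random effects model,
`Var(X̄) = (1/N) ∑_{u ≠ ∅} ν_u σ²_u`. -/
theorem stmt0 {r : ℕ} (hr : 1 ≤ r) {Ω : Type*}
    (E : (Ω → ℝ) →ₗ[ℝ] ℝ) (hE1 : E (fun _ => 1) = 1)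
    (Z : (Fin r → ℕ) → ℝ)
    (hZ01 : ∀ i, Z i = 0 ∨ Z i = 1)
    (hZfin : (Function.support Z).Finite)
    (N : ℝ) (hN : N = ∑ᶠ i, Z i) (hNpos : 0 < N)
    (μ : ℝ) (σ2 : Finset (Fin r) → ℝ)
    (ε : (Fin r → ℕ) → Finset (Fin r) → Ω → ℝ)
    (hdep : ∀ i i' u, (∀ j ∈ u, i j = i' j) → ε i u = ε i' u)
    (hmean : ∀ i u, u.Nonempty → E (ε i u) = 0)
    (hcov : ∀ i i' u u', u.Nonempty → u'.Nonempty →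
      E (fun ω => ε i u ω * ε i' u' ω)
        = σ2 u * (if u = u' ∧ ∀ j ∈ u, i j = i' j then (1 : ℝ) else 0))
    (X : (Fin r → ℕ) → Ω → ℝ)
    (hX : ∀ i ω, X i ω = μ + ∑ u ∈ Finset.univ.erase (∅ : Finset (Fin r)), ε i u ω)
    (Nmatch : (Fin r → ℕ) → Finset (Fin r) → ℝ)
    (hNmatch : ∀ i u, Nmatch i u
      = ∑ᶠ i', Z i' * (if ∀ j ∈ u, i j = i' j then (1 : ℝ) else 0))
    (ν : Finset (Fin r) → ℝ)
    (hν : ∀ u, ν u = (1 / N) * ∑ᶠ i, Z i * Nmatch i u)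
    (Xbar : Ω → ℝ)
    (hXbar : ∀ ω, Xbar ω = (1 / N) * ∑ᶠ i, Z i * X i ω) :
    E (fun ω => (Xbar ω - μ) ^ 2)
      = (1 / N) * ∑ u ∈ Finset.univ.erase (∅ : Finset (Fin r)), ν u * σ2 u :=
  stmt0_general E Z hZfin N hN hNpos μ σ2 ε hcov X hX Nmatch hNmatch ν hν Xbar hXbar
end

section
/- Under the r-fold crossed random effects model, the expectation of the naive bootstrap variance estimate (1/N²)∑_i Z_i (X_i − X̄)² equals (1/N)∑_{u≠∅} σ²_u (1 − ν_u/N). -/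
/-! The naive bootstrap variance is the U-statistic `(1/(2N³)) ∑_i ∑_i' Z_i Z_i' (X_i − X_i')²`,
in which `μ` cancels. Only the effects that two cells `i, i'` do not share survive in `X_i − X_i'`,
so `E (X_i − X_i')² = 2 ∑_u σ²_u (1 − 1{i_u = i'_u})`, and summing the indicators over the pairs of
observed cells gives `N ν_u`. -/

open Finset

theorem Finset.sum_mul_sub_weightedMean_sq {ι : Type*} (s : Finset ι) (w x : ι → ℝ)
    (hW : ∑ i ∈ s, w i ≠ 0) :
    ∑ i ∈ s, w i * (x i - (∑ j ∈ s, w j * x j) / ∑ j ∈ s, w j) ^ 2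
      = (2 * ∑ i ∈ s, w i)⁻¹ * ∑ i ∈ s, ∑ j ∈ s, w i * w j * (x i - x j) ^ 2 := by
  set W := ∑ i ∈ s, w i
  set M := ∑ i ∈ s, w i * x i
  set Q := ∑ i ∈ s, w i * x i ^ 2
  have hlhs : ∑ i ∈ s, w i * (x i - M / W) ^ 2 = Q - 2 * (M / W) * M + (M / W) ^ 2 * W := by
    simp only [Q, M, W, mul_sum, ← sum_sub_distrib, ← sum_add_distrib]
    exact sum_congr rfl fun i _ => by ring
  have hrhs : ∑ i ∈ s, ∑ j ∈ s, w i * w j * (x i - x j) ^ 2 = 2 * (W * Q - M ^ 2) := by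
    have : ∀ i j, w i * w j * (x i - x j) ^ 2
        = w i * x i ^ 2 * w j - 2 * (w i * x i) * (w j * x j) + w i * (w j * x j ^ 2) := by
      intro i j; ring
    simp only [this, sum_add_distrib, sum_sub_distrib, ← sum_mul, ← mul_sum, Q, M, W]
    ring
  rw [hlhs, hrhs]
  field_simp
  ring

theorem Finset.sum_sum_mul_mul_sum_one_sub {ι κ : Type*} (s : Finset ι) (U : Finset κ)
    (w : ι → ℝ) (σ : κ → ℝ) (m : κ → ι → ι → ℝ) :
    ∑ i ∈ s, ∑ j ∈ s, w i * w j * ∑ u ∈ U, σ u * (1 - m u i j)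
      = ∑ u ∈ U, σ u * ((∑ i ∈ s, w i) ^ 2 - ∑ i ∈ s, ∑ j ∈ s, w i * w j * m u i j) := by
  calc ∑ i ∈ s, ∑ j ∈ s, w i * w j * ∑ u ∈ U, σ u * (1 - m u i j)
      = ∑ i ∈ s, ∑ j ∈ s, ∑ u ∈ U, σ u * (w i * w j - w i * w j * m u i j) := by
        simp_rw [mul_sum]
        exact sum_congr rfl fun i _ => sum_congr rfl fun j _ => sum_congr rfl fun u _ => by ring
    _ = ∑ u ∈ U, ∑ i ∈ s, ∑ j ∈ s, σ u * (w i * w j - w i * w j * m u i j) := sum_comm_cycle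
    _ = ∑ u ∈ U, σ u * ((∑ i ∈ s, w i) ^ 2 - ∑ i ∈ s, ∑ j ∈ s, w i * w j * m u i j) := by
        simp_rw [sq, sum_mul_sum, ← sum_sub_distrib, mul_sum]

namespace LinearMap

variable {Ω ι κ : Type*} (E : (Ω → ℝ) →ₗ[ℝ] ℝ)

theorem map_fun_sum (s : Finset ι) (f : ι → Ω → ℝ) :
    E (fun ω => ∑ x ∈ s, f x ω) = ∑ x ∈ s, E (f x) := by
  rw [← map_sum, Finset.sum_fn]

theorem map_const_mul (c : ℝ) (f : Ω → ℝ) : E (fun ω => c * f ω) = c * E f :=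
  E.map_smul c f

theorem map_fun_sum_mul_sum (s : Finset ι) (t : Finset κ) (f : ι → Ω → ℝ) (g : κ → Ω → ℝ) :
    E (fun ω => (∑ x ∈ s, f x ω) * ∑ y ∈ t, g y ω)
      = ∑ x ∈ s, ∑ y ∈ t, E (fun ω => f x ω * g y ω) := by
  simp_rw [sum_mul_sum, map_fun_sum]

end LinearMap

theorem LinearMap.map_sq_sum_sub_of_crossedCov {r : ℕ} {α Ω : Type*} [DecidableEq α]
    (E : (Ω → ℝ) →ₗ[ℝ] ℝ) (U : Finset (Finset (Fin r))) (σ2 : Finset (Fin r) → ℝ)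
    (ε : (Fin r → α) → Finset (Fin r) → Ω → ℝ)
    (hcov : ∀ i i', ∀ u ∈ U, ∀ u' ∈ U, E (fun ω => ε i u ω * ε i' u' ω)
        = σ2 u * (if u = u' ∧ ∀ j ∈ u, i j = i' j then (1 : ℝ) else 0))
    (i i' : Fin r → α) :
    E (fun ω => (∑ u ∈ U, (ε i u ω - ε i' u ω)) ^ 2)
      = 2 * ∑ u ∈ U, σ2 u * (1 - if ∀ j ∈ u, i j = i' j then (1 : ℝ) else 0) := by
  have hcross : ∀ u ∈ U, ∀ u' ∈ U,
      E (fun ω => (ε i u ω - ε i' u ω) * (ε i u' ω - ε i' u' ω))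
        = if u = u' then 2 * σ2 u * (1 - if ∀ j ∈ u, i j = i' j then (1 : ℝ) else 0) else 0 := by
    intro u hu u' hu'
    have hexpand : (fun ω => (ε i u ω - ε i' u ω) * (ε i u' ω - ε i' u' ω))
        = (fun ω => ε i u ω * ε i u' ω) - (fun ω => ε i u ω * ε i' u' ω)
          - (fun ω => ε i' u ω * ε i u' ω) + (fun ω => ε i' u ω * ε i' u' ω) := by
      funext ω; simp only [Pi.add_apply, Pi.sub_apply]; ring
    rw [hexpand, map_add, map_sub, map_sub, hcov i i u hu u' hu', hcov i i' u hu u' hu',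
      hcov i' i u hu u' hu', hcov i' i' u hu u' hu']
    by_cases h : u = u'
    · subst h
      simp_rw [eq_comm (a := i' _)]
      simp only [true_and, implies_true, if_true]
      ring
    · simp [h]
  simp_rw [sq, E.map_fun_sum_mul_sum, mul_sum]
  refine sum_congr rfl fun u hu => ?_
  rw [sum_congr rfl (hcross u hu), sum_ite_eq, if_pos hu, mul_assoc]

theorem stmt1_general {r : ℕ} {Ω : Type*}
    (E : (Ω → ℝ) →ₗ[ℝ] ℝ)
    (Z : (Fin r → ℕ) → ℝ)
    (hZfin : (Function.support Z).Finite)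
    (N : ℝ) (hN : N = ∑ᶠ i, Z i) (hNpos : 0 < N)
    (μ : ℝ) (σ2 : Finset (Fin r) → ℝ)
    (ε : (Fin r → ℕ) → Finset (Fin r) → Ω → ℝ)
    (hcov : ∀ i i' u u', u.Nonempty → u'.Nonempty →
      E (fun ω => ε i u ω * ε i' u' ω)
        = σ2 u * (if u = u' ∧ ∀ j ∈ u, i j = i' j then (1 : ℝ) else 0))
    (X : (Fin r → ℕ) → Ω → ℝ)
    (hX : ∀ i ω, X i ω = μ + ∑ u ∈ Finset.univ.erase (∅ : Finset (Fin r)), ε i u ω)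
    (Nmatch : (Fin r → ℕ) → Finset (Fin r) → ℝ)
    (hNmatch : ∀ i u, Nmatch i u
      = ∑ᶠ i', Z i' * (if ∀ j ∈ u, i j = i' j then (1 : ℝ) else 0))
    (ν : Finset (Fin r) → ℝ)
    (hν : ∀ u, ν u = (1 / N) * ∑ᶠ i, Z i * Nmatch i u)
    (Xbar : Ω → ℝ)
    (hXbar : ∀ ω, Xbar ω = (1 / N) * ∑ᶠ i, Z i * X i ω) :
    E (fun ω => (1 / N ^ 2) * ∑ᶠ i, Z i * (X i ω - Xbar ω) ^ 2)
      = (1 / N) * ∑ u ∈ Finset.univ.erase (∅ : Finset (Fin r)),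
          σ2 u * (1 - ν u / N) := by
  set U := univ.erase (∅ : Finset (Fin r))
  set S := hZfin.toFinset
  have hfinsum : ∀ f : (Fin r → ℕ) → ℝ, ∑ᶠ i, Z i * f i = ∑ i ∈ S, Z i * f i := fun f =>
    finsum_eq_sum_of_support_subset_of_finite _ (Function.support_mul_subset_left _ _) hZfin
  have hNS : N = ∑ i ∈ S, Z i :=
    hN.trans (finsum_eq_sum_of_support_subset_of_finite _ subset_rfl hZfin)
  have hcovU : ∀ i i', ∀ u ∈ U, ∀ u' ∈ U, E (fun ω => ε i u ω * ε i' u' ω)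
      = σ2 u * (if u = u' ∧ ∀ j ∈ u, i j = i' j then (1 : ℝ) else 0) :=
    fun i i' u hu u' hu' => hcov i i' u u' (nonempty_iff_ne_empty.2 (ne_of_mem_erase hu))
      (nonempty_iff_ne_empty.2 (ne_of_mem_erase hu'))
  have hdiff : ∀ i i' ω, X i ω - X i' ω = ∑ u ∈ U, (ε i u ω - ε i' u ω) := by
    intro i i' ω
    rw [hX, hX, sum_sub_distrib]
    ring
  have hν' : ∀ u, ν u = (∑ i ∈ S, ∑ i' ∈ S, Z i * Z i' *
      (if ∀ j ∈ u, i j = i' j then (1 : ℝ) else 0)) / N := by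
    intro u
    rw [hν, hfinsum, one_div_mul_eq_div]
    simp_rw [hNmatch, hfinsum, mul_sum, mul_assoc]
  have hVarNB : ∀ ω, ∑ᶠ i, Z i * (X i ω - Xbar ω) ^ 2
      = (2 * N)⁻¹ * ∑ i ∈ S, ∑ i' ∈ S, Z i * Z i' * (X i ω - X i' ω) ^ 2 := by
    intro ω
    rw [hfinsum, hXbar, hfinsum, one_div_mul_eq_div, hNS]
    exact sum_mul_sub_weightedMean_sq S Z (X · ω) (hNS ▸ hNpos.ne')
  calc E (fun ω => (1 / N ^ 2) * ∑ᶠ i, Z i * (X i ω - Xbar ω) ^ 2)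
      = (1 / N ^ 2 * (2 * N)⁻¹) * ∑ i ∈ S, ∑ i' ∈ S,
          Z i * Z i' * E (fun ω => (X i ω - X i' ω) ^ 2) := by
        simp_rw [hVarNB, ← mul_assoc, E.map_const_mul, E.map_fun_sum, E.map_const_mul]
    _ = (1 / N ^ 2 * (2 * N)⁻¹) * ∑ i ∈ S, ∑ i' ∈ S,
          Z i * Z i' * (2 * ∑ u ∈ U, σ2 u * (1 - if ∀ j ∈ u, i j = i' j then (1 : ℝ) else 0)) := by
        simp_rw [hdiff, E.map_sq_sum_sub_of_crossedCov U σ2 ε hcovU]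
    _ = (1 / N) * ∑ u ∈ U, σ2 u * (1 - ν u / N) := by
        simp_rw [mul_left_comm _ (2 : ℝ), ← mul_sum, sum_sum_mul_mul_sum_one_sub, hν', ← hNS,
          mul_sum]
        refine sum_congr rfl fun u _ => ?_
        field_simp

/-- Theorem 2: expected value of the naive bootstrap variance estimate
`(1/N²) ∑_i Z_i (X_i − X̄)²` equals `(1/N) ∑_{u≠∅} σ²_u (1 − ν_u/N)`. -/
theorem stmt1 {r : ℕ} (hr : 1 ≤ r) {Ω : Type*}
    (E : (Ω → ℝ) →ₗ[ℝ] ℝ) (hE1 : E (fun _ => 1) = 1)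
    (Z : (Fin r → ℕ) → ℝ)
    (hZ01 : ∀ i, Z i = 0 ∨ Z i = 1)
    (hZfin : (Function.support Z).Finite)
    (N : ℝ) (hN : N = ∑ᶠ i, Z i) (hNpos : 0 < N)
    (μ : ℝ) (σ2 : Finset (Fin r) → ℝ)
    (ε : (Fin r → ℕ) → Finset (Fin r) → Ω → ℝ)
    (hdep : ∀ i i' u, (∀ j ∈ u, i j = i' j) → ε i u = ε i' u)
    (hmean : ∀ i u, u.Nonempty → E (ε i u) = 0)
    (hcov : ∀ i i' u u', u.Nonempty → u'.Nonempty →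
      E (fun ω => ε i u ω * ε i' u' ω)
        = σ2 u * (if u = u' ∧ ∀ j ∈ u, i j = i' j then (1 : ℝ) else 0))
    (X : (Fin r → ℕ) → Ω → ℝ)
    (hX : ∀ i ω, X i ω = μ + ∑ u ∈ Finset.univ.erase (∅ : Finset (Fin r)), ε i u ω)
    (Nmatch : (Fin r → ℕ) → Finset (Fin r) → ℝ)
    (hNmatch : ∀ i u, Nmatch i u
      = ∑ᶠ i', Z i' * (if ∀ j ∈ u, i j = i' j then (1 : ℝ) else 0))
    (ν : Finset (Fin r) → ℝ)
    (hν : ∀ u, ν u = (1 / N) * ∑ᶠ i, Z i * Nmatch i u)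
    (Xbar : Ω → ℝ)
    (hXbar : ∀ ω, Xbar ω = (1 / N) * ∑ᶠ i, Z i * X i ω) :
    E (fun ω => (1 / N ^ 2) * ∑ᶠ i, Z i * (X i ω - Xbar ω) ^ 2)
      = (1 / N) * ∑ u ∈ Finset.univ.erase (∅ : Finset (Fin r)),
          σ2 u * (1 - ν u / N) :=
  stmt1_general E Z hZfin N hN hNpos μ σ2 ε hcov X hX Nmatch hNmatch ν hν Xbar hXbar
end

section
/- In the random effects model with Y_i = X_i − X̄, for any indices i, i': E(Y_i Y_{i'}) = ∑_{u≠∅} σ²_u ( 1{i_u=i'_u} − N_{i,u}/N − N_{i',u}/N + ν_u/N ). -/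
open scoped BigOperators

/-- Lemma 1: with `Y_i = X_i − X̄`,
`E(Y_i Y_{i'}) = ∑_{u≠∅} σ²_u (1{i_u=i'_u} − N_{i,u}/N − N_{i',u}/N + ν_u/N)`. -/
theorem stmt3 {r : ℕ} (hr : 1 ≤ r) {Ω : Type*}
    (E : (Ω → ℝ) →ₗ[ℝ] ℝ) (hE1 : E (fun _ => 1) = 1)
    (Z : (Fin r → ℕ) → ℝ)
    (hZ01 : ∀ i, Z i = 0 ∨ Z i = 1)
    (hZfin : (Function.support Z).Finite)
    (N : ℝ) (hN : N = ∑ᶠ i, Z i) (hNpos : 0 < N)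
    (μ : ℝ) (σ2 : Finset (Fin r) → ℝ)
    (ε : (Fin r → ℕ) → Finset (Fin r) → Ω → ℝ)
    (hdep : ∀ i i' u, (∀ j ∈ u, i j = i' j) → ε i u = ε i' u)
    (hmean : ∀ i u, u.Nonempty → E (ε i u) = 0)
    (hcov : ∀ i i' u u', u.Nonempty → u'.Nonempty →
      E (fun ω => ε i u ω * ε i' u' ω)
        = σ2 u * (if u = u' ∧ ∀ j ∈ u, i j = i' j then (1 : ℝ) else 0))
    (X : (Fin r → ℕ) → Ω → ℝ)
    (hX : ∀ i ω, X i ω = μ + ∑ u ∈ Finset.univ.erase (∅ : Finset (Fin r)), ε i u ω)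
    (Nmatch : (Fin r → ℕ) → Finset (Fin r) → ℝ)
    (hNmatch : ∀ i u, Nmatch i u
      = ∑ᶠ i', Z i' * (if ∀ j ∈ u, i j = i' j then (1 : ℝ) else 0))
    (ν : Finset (Fin r) → ℝ)
    (hν : ∀ u, ν u = (1 / N) * ∑ᶠ i, Z i * Nmatch i u)
    (Xbar : Ω → ℝ)
    (hXbar : ∀ ω, Xbar ω = (1 / N) * ∑ᶠ i, Z i * X i ω)
    (i i' : Fin r → ℕ) :
    E (fun ω => (X i ω - Xbar ω) * (X i' ω - Xbar ω))
      = ∑ u ∈ Finset.univ.erase (∅ : Finset (Fin r)),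
          σ2 u * ((if ∀ j ∈ u, i j = i' j then (1 : ℝ) else 0)
            - Nmatch i u / N - Nmatch i' u / N + ν u / N) := by
  classical
  have hNne : N ≠ 0 := ne_of_gt hNpos
  set s : Finset (Fin r → ℕ) := hZfin.toFinset with hsdef
  have hsum : ∀ f : (Fin r → ℕ) → ℝ, (∑ᶠ k, Z k * f k) = ∑ k ∈ s, Z k * f k := by
    intro f
    refine finsum_eq_finset_sum_of_support_subset _ ?_
    intro k hk
    have hZk : Z k ≠ 0 := by
      simp only [Function.mem_support] at hk
      exact fun h => hk (by simp [h])
    simpa [hsdef, Set.Finite.mem_toFinset, Function.mem_support] using hZk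
  have hNs : N = ∑ k ∈ s, Z k := by
    rw [hN]
    refine finsum_eq_finset_sum_of_support_subset _ ?_
    intro k hk
    simpa [hsdef, Set.Finite.mem_toFinset] using hk
  set T : Finset (Finset (Fin r)) := Finset.univ.erase (∅ : Finset (Fin r)) with hTdef
  set c : Finset (Fin r) → Ω → ℝ :=
    fun u ω => (1 / N) * ∑ k ∈ s, Z k * ε k u ω with hc
  -- rewrite Nmatch and ν as finite sums
  have hNm : ∀ (a : Fin r → ℕ) u, Nmatch a u
      = ∑ k ∈ s, Z k * (if ∀ j ∈ u, a j = k j then (1 : ℝ) else 0) := by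
    intro a u
    rw [hNmatch a u]
    exact hsum _
  have hν' : ∀ u, ν u = (1 / N) * ∑ k ∈ s, Z k * Nmatch k u := by
    intro u
    rw [hν u]
    congr 1
    exact hsum _
  -- Xbar in closed form
  have hXbar' : ∀ ω, Xbar ω = μ + ∑ u ∈ T, c u ω := by
    intro ω
    rw [hXbar, hsum]
    have h1 : ∑ k ∈ s, Z k * X k ω
        = (∑ k ∈ s, Z k) * μ + ∑ u ∈ T, ∑ k ∈ s, Z k * ε k u ω := by
      calc ∑ k ∈ s, Z k * X k ω
          = ∑ k ∈ s, (Z k * μ + ∑ u ∈ T, Z k * ε k u ω) := by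
            refine Finset.sum_congr rfl fun k _ => ?_
            rw [hX, mul_add, Finset.mul_sum]
        _ = (∑ k ∈ s, Z k) * μ + ∑ u ∈ T, ∑ k ∈ s, Z k * ε k u ω := by
            rw [Finset.sum_add_distrib, Finset.sum_mul, Finset.sum_comm]
    rw [h1, ← hNs, mul_add, Finset.mul_sum]
    have : (1 / N) * (N * μ) = μ := by field_simp
    rw [this]
  -- Y in closed form
  have hY : ∀ (a : Fin r → ℕ) ω, X a ω - Xbar ω = ∑ u ∈ T, (ε a u ω - c u ω) := by
    intro a ω
    rw [hX, hXbar' ω, Finset.sum_sub_distrib]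
    ring
  -- linearity of E over finite sums with coefficients
  have hEsum : ∀ {β : Type} (t : Finset β) (a : β → ℝ) (f : β → Ω → ℝ),
      E (fun ω => ∑ k ∈ t, a k * f k ω) = ∑ k ∈ t, a k * E (f k) := by
    intro β t a f
    have h : (fun ω => ∑ k ∈ t, a k * f k ω) = ∑ k ∈ t, a k • f k := by
      funext ω
      simp [Finset.sum_apply]
    rw [h, map_sum]
    refine Finset.sum_congr rfl fun k _ => ?_
    rw [map_smul, smul_eq_mul]
  -- E of ε times c
  have hE2gen : ∀ (a : Fin r → ℕ) (u u' : Finset (Fin r)), u.Nonempty → u'.Nonempty →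
      E (fun ω => ε a u ω * c u' ω)
        = ∑ k ∈ s, (1 / N) * Z k *
            (σ2 u * (if u = u' ∧ ∀ j ∈ u, a j = k j then (1 : ℝ) else 0)) := by
    intro a u u' hu hu'
    have h : (fun ω => ε a u ω * c u' ω)
        = (fun ω => ∑ k ∈ s, ((1 / N) * Z k) * (fun ω' => ε a u ω' * ε k u' ω') ω) := by
      funext ω
      simp only [hc, Finset.mul_sum]
      refine Finset.sum_congr rfl fun k _ => ?_
      ring
    rw [h, hEsum s (fun k => (1 / N) * Z k) (fun k ω => ε a u ω * ε k u' ω)]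
    refine Finset.sum_congr rfl fun k _ => ?_
    rw [hcov a k u u' hu hu']
  have hE3gen : ∀ (b : Fin r → ℕ) (u u' : Finset (Fin r)), u.Nonempty → u'.Nonempty →
      E (fun ω => c u ω * ε b u' ω)
        = ∑ k ∈ s, (1 / N) * Z k *
            (σ2 u * (if u = u' ∧ ∀ j ∈ u, k j = b j then (1 : ℝ) else 0)) := by
    intro b u u' hu hu'
    have h : (fun ω => c u ω * ε b u' ω)
        = (fun ω => ∑ k ∈ s, ((1 / N) * Z k) * (fun ω' => ε k u ω' * ε b u' ω') ω) := by
      funext ω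
      simp only [hc]
      rw [Finset.mul_sum, Finset.sum_mul]
      refine Finset.sum_congr rfl fun k _ => ?_
      ring
    rw [h, hEsum s (fun k => (1 / N) * Z k) (fun k ω => ε k u ω * ε b u' ω)]
    refine Finset.sum_congr rfl fun k _ => ?_
    rw [hcov k b u u' hu hu']
  -- E of c times c
  have hE4 : ∀ (u u' : Finset (Fin r)), u.Nonempty → u'.Nonempty →
      E (fun ω => c u ω * c u' ω)
        = ∑ k ∈ s, (1 / N) * Z k *
            (∑ l ∈ s, (1 / N) * Z l *
              (σ2 u * (if u = u' ∧ ∀ j ∈ u, k j = l j then (1 : ℝ) else 0))) := by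
    intro u u' hu hu'
    have h : (fun ω => c u ω * c u' ω)
        = (fun ω => ∑ k ∈ s, ((1 / N) * Z k) * (fun ω' => ε k u ω' * c u' ω') ω) := by
      funext ω
      conv_lhs => rw [hc]
      simp only
      rw [Finset.mul_sum, Finset.sum_mul]
      refine Finset.sum_congr rfl fun k _ => ?_
      ring
    rw [h, hEsum s (fun k => (1 / N) * Z k) (fun k ω => ε k u ω * c u' ω)]
    refine Finset.sum_congr rfl fun k _ => ?_
    rw [hE2gen k u u' hu hu']
  -- the key per-(u,u') computation
  have key : ∀ u ∈ T, ∀ u' ∈ T,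
      E (fun ω => (ε i u ω - c u ω) * (ε i' u' ω - c u' ω))
        = if u = u' then
            σ2 u * ((if ∀ j ∈ u, i j = i' j then (1 : ℝ) else 0)
              - Nmatch i u / N - Nmatch i' u / N + ν u / N)
          else 0 := by
    intro u hu u' hu'
    have hune : u.Nonempty := by
      rw [Finset.nonempty_iff_ne_empty]
      exact Finset.ne_of_mem_erase hu
    have hu'ne : u'.Nonempty := by
      rw [Finset.nonempty_iff_ne_empty]
      exact Finset.ne_of_mem_erase hu'
    have hfun : (fun ω => (ε i u ω - c u ω) * (ε i' u' ω - c u' ω))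
        = (fun ω => ε i u ω * ε i' u' ω) - (fun ω => ε i u ω * c u' ω)
          - (fun ω => c u ω * ε i' u' ω) + (fun ω => c u ω * c u' ω) := by
      funext ω
      simp only [Pi.add_apply, Pi.sub_apply]
      ring
    rw [hfun, map_add, map_sub, map_sub, hcov i i' u u' hune hu'ne,
      hE2gen i u u' hune hu'ne, hE3gen i' u u' hune hu'ne, hE4 u u' hune hu'ne]
    by_cases huu : u = u'
    · subst huu
      simp only [eq_self_iff_true, true_and, if_true]
      have e2 : ∑ k ∈ s, (1 / N) * Z k *
            (σ2 u * (if ∀ j ∈ u, i j = k j then (1 : ℝ) else 0))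
          = σ2 u * (Nmatch i u / N) := by
        rw [hNm i u, Finset.sum_div, Finset.mul_sum]
        refine Finset.sum_congr rfl fun k _ => ?_
        ring
      have e3 : ∑ k ∈ s, (1 / N) * Z k *
            (σ2 u * (if ∀ j ∈ u, k j = i' j then (1 : ℝ) else 0))
          = σ2 u * (Nmatch i' u / N) := by
        rw [hNm i' u, Finset.sum_div, Finset.mul_sum]
        refine Finset.sum_congr rfl fun k _ => ?_
        have : (if ∀ j ∈ u, k j = i' j then (1 : ℝ) else 0)
            = (if ∀ j ∈ u, i' j = k j then (1 : ℝ) else 0) := by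
          refine if_congr ?_ rfl rfl
          constructor <;> intro h j hj <;> exact (h j hj).symm
        rw [this]
        ring
      have e4 : ∑ k ∈ s, (1 / N) * Z k *
            (∑ l ∈ s, (1 / N) * Z l *
              (σ2 u * (if ∀ j ∈ u, k j = l j then (1 : ℝ) else 0)))
          = σ2 u * (ν u / N) := by
        have hkk : ∀ k, ∑ l ∈ s, (1 / N) * Z l *
              (σ2 u * (if ∀ j ∈ u, k j = l j then (1 : ℝ) else 0))
            = σ2 u * (Nmatch k u / N) := by
          intro k
          rw [hNm k u, Finset.sum_div, Finset.mul_sum]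
          refine Finset.sum_congr rfl fun l _ => ?_
          ring
        calc ∑ k ∈ s, (1 / N) * Z k *
              (∑ l ∈ s, (1 / N) * Z l *
                (σ2 u * (if ∀ j ∈ u, k j = l j then (1 : ℝ) else 0)))
            = ∑ k ∈ s, (1 / N) * Z k * (σ2 u * (Nmatch k u / N)) := by
              refine Finset.sum_congr rfl fun k _ => ?_
              rw [hkk k]
          _ = σ2 u * (((1 / N) * ∑ k ∈ s, Z k * Nmatch k u) / N) := by
              rw [Finset.mul_sum, Finset.sum_div, Finset.mul_sum]
              refine Finset.sum_congr rfl fun k _ => ?_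
              ring
          _ = σ2 u * (ν u / N) := by rw [← hν' u]
      rw [e2, e3, e4]
      ring
    · simp [huu]
  -- expand the product into a double sum of functions
  have hprod : (fun ω => (X i ω - Xbar ω) * (X i' ω - Xbar ω))
      = ∑ u ∈ T, ∑ u' ∈ T,
          (fun ω => (ε i u ω - c u ω) * (ε i' u' ω - c u' ω)) := by
    funext ω
    rw [show (∑ u ∈ T, ∑ u' ∈ T,
          (fun ω => (ε i u ω - c u ω) * (ε i' u' ω - c u' ω))) ω
        = ∑ u ∈ T, ∑ u' ∈ T, (ε i u ω - c u ω) * (ε i' u' ω - c u' ω) by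
          simp [Finset.sum_apply]]
    rw [hY i ω, hY i' ω, Finset.sum_mul_sum]
  rw [hprod, map_sum]
  refine Finset.sum_congr rfl fun u hu => ?_
  rw [map_sum]
  calc ∑ u' ∈ T, E (fun ω => (ε i u ω - c u ω) * (ε i' u' ω - c u' ω))
      = ∑ u' ∈ T, if u = u' then
            σ2 u * ((if ∀ j ∈ u, i j = i' j then (1 : ℝ) else 0)
              - Nmatch i u / N - Nmatch i' u / N + ν u / N)
          else 0 := by
        refine Finset.sum_congr rfl fun u' hu' => key u hu u' hu'
    _ = σ2 u * ((if ∀ j ∈ u, i j = i' j then (1 : ℝ) else 0)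
          - Nmatch i u / N - Nmatch i' u / N + ν u / N) := by
        rw [Finset.sum_ite_eq]
        simp [hu]
end

section
/- Under the random effects model and with product weights W_i = ∏_j W_{j,i_j} (independent mean-1 variance-τ² factors), the expected delta-method bootstrap variance E_RE(Ṽar_PW(X̄*)) = (1/N²)E(∑_i∑_{i'} Z_i Z_{i'} E_W(W_i W_{i'}) Y_i Y_{i'}) equals (1/N)∑_{u≠∅} γ_u σ²_u, where γ_u = ∑_{k=0}^r (1+τ²)^k (ν_{k,u} − 2ν̃_{k,u} + ρ_k ν_u). -/
open scoped BigOperators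

/-- Theorem 4 (product-weighted bootstrap variance): with product weights of
variance `τ²`, so that `E_W(W_i W_{i'}) = (1+τ²)^{|M_{ii'}|}`,
`E_RE(Ṽar_PW(X̄*)) = (1/N) ∑_{u≠∅} γ_u σ²_u` with
`γ_u = ∑_{k=0}^r (1+τ²)^k (ν_{k,u} − 2ν̃_{k,u} + ρ_k ν_u)`. -/
theorem stmt5 {r : ℕ} (hr : 1 ≤ r) {Ω : Type*}
    (E : (Ω → ℝ) →ₗ[ℝ] ℝ) (hE1 : E (fun _ => 1) = 1)
    (Z : (Fin r → ℕ) → ℝ)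
    (hZ01 : ∀ i, Z i = 0 ∨ Z i = 1)
    (hZfin : (Function.support Z).Finite)
    (N : ℝ) (hN : N = ∑ᶠ i, Z i) (hNpos : 0 < N)
    (μ : ℝ) (σ2 : Finset (Fin r) → ℝ) (τ2 : ℝ)
    (ε : (Fin r → ℕ) → Finset (Fin r) → Ω → ℝ)
    (hdep : ∀ i i' u, (∀ j ∈ u, i j = i' j) → ε i u = ε i' u)
    (hmean : ∀ i u, u.Nonempty → E (ε i u) = 0)
    (hcov : ∀ i i' u u', u.Nonempty → u'.Nonempty →
      E (fun ω => ε i u ω * ε i' u' ω)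
        = σ2 u * (if u = u' ∧ ∀ j ∈ u, i j = i' j then (1 : ℝ) else 0))
    (X : (Fin r → ℕ) → Ω → ℝ)
    (hX : ∀ i ω, X i ω = μ + ∑ u ∈ Finset.univ.erase (∅ : Finset (Fin r)), ε i u ω)
    (Xbar : Ω → ℝ)
    (hXbar : ∀ ω, Xbar ω = (1 / N) * ∑ᶠ i, Z i * X i ω)
    (Nmatch : (Fin r → ℕ) → Finset (Fin r) → ℝ)
    (hNmatch : ∀ i u, Nmatch i u
      = ∑ᶠ i', Z i' * (if ∀ j ∈ u, i j = i' j then (1 : ℝ) else 0))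
    (NmatchK : (Fin r → ℕ) → ℕ → ℝ)
    (hNmatchK : ∀ i k, NmatchK i k
      = ∑ᶠ i', Z i' * (if (Finset.univ.filter (fun j => i j = i' j)).card = k
          then (1 : ℝ) else 0))
    (ν : Finset (Fin r) → ℝ)
    (hν : ∀ u, ν u = (1 / N) * ∑ᶠ i, Z i * Nmatch i u)
    (ρ : ℕ → ℝ)
    (hρ : ∀ k, ρ k = (1 / N ^ 2) * ∑ᶠ i, Z i * NmatchK i k)
    (νk : ℕ → Finset (Fin r) → ℝ)
    (hνk : ∀ k u, νk k u = (1 / N) * ∑ᶠ i, ∑ᶠ i', Z i * Z i' *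
      (if (Finset.univ.filter (fun j => i j = i' j)).card = k ∧ ∀ j ∈ u, i j = i' j
        then (1 : ℝ) else 0))
    (νt : ℕ → Finset (Fin r) → ℝ)
    (hνt : ∀ k u, νt k u = (1 / N ^ 2) * ∑ᶠ i, Z i * Nmatch i u * NmatchK i k)
    (γ : Finset (Fin r) → ℝ)
    (hγ : ∀ u, γ u = ∑ k ∈ Finset.range (r + 1),
      (1 + τ2) ^ k * (νk k u - 2 * νt k u + ρ k * ν u)) :
    (1 / N ^ 2) * E (fun ω => ∑ᶠ i, ∑ᶠ i', Z i * Z i' *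
        (1 + τ2) ^ (Finset.univ.filter (fun j => i j = i' j)).card *
        ((X i ω - Xbar ω) * (X i' ω - Xbar ω)))
      = (1 / N) * ∑ u ∈ Finset.univ.erase (∅ : Finset (Fin r)), γ u * σ2 u := by
  classical
  have hNne : N ≠ 0 := ne_of_gt hNpos
  set S : Finset (Fin r → ℕ) := hZfin.toFinset with hSdef
  set U : Finset (Finset (Fin r)) := Finset.univ.erase (∅ : Finset (Fin r)) with hUdef
  -- finsum to finset sum conversions
  have hfs : ∀ g : (Fin r → ℕ) → ℝ, (∑ᶠ i, Z i * g i) = ∑ i ∈ S, Z i * g i := by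
    intro g
    apply finsum_eq_finset_sum_of_support_subset
    intro i hi
    simp only [Function.mem_support] at hi
    rw [Finset.mem_coe, hSdef, Set.Finite.mem_toFinset, Function.mem_support]
    intro h; exact hi (by rw [h, zero_mul])
  have hfs2 : ∀ g : (Fin r → ℕ) → (Fin r → ℕ) → ℝ,
      (∑ᶠ i, ∑ᶠ i', Z i * Z i' * g i i') = ∑ i ∈ S, ∑ i' ∈ S, Z i * Z i' * g i i' := by
    intro g
    have h1 : ∀ i, (∑ᶠ i', Z i * Z i' * g i i') = Z i * ∑ i' ∈ S, Z i' * g i i' := by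
      intro i
      calc (∑ᶠ i', Z i * Z i' * g i i') = ∑ᶠ i', Z i' * (Z i * g i i') :=
            finsum_congr (fun i' => by ring)
        _ = ∑ i' ∈ S, Z i' * (Z i * g i i') := hfs _
        _ = Z i * ∑ i' ∈ S, Z i' * g i i' := by
            rw [Finset.mul_sum]; exact Finset.sum_congr rfl (fun i' _ => by ring)
    rw [finsum_congr h1, hfs]
    exact Finset.sum_congr rfl (fun i _ => by rw [Finset.mul_sum]; exact Finset.sum_congr rfl (fun i' _ => by ring))
  -- expectation helpers
  have hEsmul : ∀ (a : ℝ) (f : Ω → ℝ), E (fun ω => a * f ω) = a * E f := by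
    intro a f
    have : (fun ω => a * f ω) = a • f := by funext ω; simp
    rw [this, map_smul, smul_eq_mul]
  have hEsum : ∀ {α : Type} (t : Finset α) (f : α → Ω → ℝ),
      E (fun ω => ∑ x ∈ t, f x ω) = ∑ x ∈ t, E (f x) := by
    intro α t f
    have : (fun ω => ∑ x ∈ t, f x ω) = ∑ x ∈ t, f x := by funext ω; simp
    rw [this, map_sum]
  have hE4 : ∀ A B C D : Ω → ℝ, E (fun ω => A ω - B ω - C ω + D ω) = E A - E B - E C + E D := by
    intro A B C D
    have : (fun ω => A ω - B ω - C ω + D ω) = A - B - C + D := rfl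
    rw [this, map_add, map_sub, map_sub]
  have hNS : N = ∑ i ∈ S, Z i := by
    have := hfs (fun _ => (1:ℝ))
    simp only [mul_one] at this
    rw [hN, this]
  -- Y decomposition
  have hY : ∀ i ω, X i ω - Xbar ω
      = ∑ u ∈ U, (ε i u ω - (1/N) * ∑ l ∈ S, Z l * ε l u ω) := by
    intro i ω
    rw [hX, hXbar, hfs (fun l => X l ω)]
    have h1 : ∑ l ∈ S, Z l * X l ω
        = (∑ l ∈ S, Z l) * μ + ∑ u ∈ U, ∑ l ∈ S, Z l * ε l u ω := by
      calc ∑ l ∈ S, Z l * X l ω = ∑ l ∈ S, (Z l * μ + ∑ u ∈ U, Z l * ε l u ω) := by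
            refine Finset.sum_congr rfl (fun l _ => ?_)
            rw [hX, mul_add, Finset.mul_sum]
        _ = (∑ l ∈ S, Z l) * μ + ∑ u ∈ U, ∑ l ∈ S, Z l * ε l u ω := by
            rw [Finset.sum_add_distrib, Finset.sum_mul, Finset.sum_comm]
    rw [h1, ← hNS, mul_add, Finset.mul_sum]
    have h2 : (1/N) * (N * μ) = μ := by field_simp
    rw [h2, Finset.sum_sub_distrib]
    ring
  -- Nmatch / NmatchK as finset sums
  have hNm : ∀ i u, Nmatch i u = ∑ i' ∈ S, Z i' * (if ∀ j ∈ u, i j = i' j then (1:ℝ) else 0) := by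
    intro i u; rw [hNmatch, hfs]
  have hNK : ∀ i k, NmatchK i k = ∑ i' ∈ S, Z i' *
      (if (Finset.univ.filter (fun j => i j = i' j)).card = k then (1:ℝ) else 0) := by
    intro i k; rw [hNmatchK, hfs]
  have hνS : ∀ u, ν u = (1/N) * ∑ i ∈ S, Z i * Nmatch i u := by
    intro u; rw [hν, hfs]
  have hρS : ∀ k, ρ k = (1/N^2) * ∑ i ∈ S, Z i * NmatchK i k := by
    intro k; rw [hρ, hfs]
  have hνtS : ∀ k u, νt k u = (1/N^2) * ∑ i ∈ S, Z i * Nmatch i u * NmatchK i k := by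
    intro k u
    rw [hνt]
    congr 1
    calc (∑ᶠ i, Z i * Nmatch i u * NmatchK i k)
        = ∑ᶠ i, Z i * (Nmatch i u * NmatchK i k) := finsum_congr (fun i => by ring)
      _ = ∑ i ∈ S, Z i * (Nmatch i u * NmatchK i k) := hfs _
      _ = ∑ i ∈ S, Z i * Nmatch i u * NmatchK i k :=
          Finset.sum_congr rfl (fun i _ => by ring)
  have hνkS : ∀ k u, νk k u = (1/N) * ∑ i ∈ S, ∑ i' ∈ S, Z i * Z i' *
      (if (Finset.univ.filter (fun j => i j = i' j)).card = k ∧ ∀ j ∈ u, i j = i' j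
        then (1:ℝ) else 0) := by
    intro k u; rw [hνk, hfs2]
  -- key expectation of e-products
  have hEprod : ∀ (i i' : Fin r → ℕ), ∀ u ∈ U, ∀ u' ∈ U,
      E (fun ω => (ε i u ω - (1/N) * ∑ l ∈ S, Z l * ε l u ω)
          * (ε i' u' ω - (1/N) * ∑ m ∈ S, Z m * ε m u' ω))
      = if u = u' then σ2 u * ((if ∀ j ∈ u, i j = i' j then (1:ℝ) else 0)
          - (1/N) * Nmatch i u - (1/N) * Nmatch i' u + (1/N) * ν u) else 0 := by
    intro i i' u hu u' hu'
    have hune : u.Nonempty := Finset.nonempty_iff_ne_empty.mpr (Finset.mem_erase.mp hu).1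
    have hu'ne : u'.Nonempty := Finset.nonempty_iff_ne_empty.mpr (Finset.mem_erase.mp hu').1
    have hint : (fun ω => (ε i u ω - (1/N) * ∑ l ∈ S, Z l * ε l u ω)
          * (ε i' u' ω - (1/N) * ∑ m ∈ S, Z m * ε m u' ω))
        = fun ω => (ε i u ω * ε i' u' ω)
          - (1/N) * (∑ m ∈ S, Z m * (ε i u ω * ε m u' ω))
          - (1/N) * (∑ l ∈ S, Z l * (ε l u ω * ε i' u' ω))
          + (1/N) * ((1/N) * (∑ l ∈ S, ∑ m ∈ S, Z l * Z m * (ε l u ω * ε m u' ω))) := by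
      funext ω
      have h2 : (∑ l ∈ S, Z l * ε l u ω) * (∑ m ∈ S, Z m * ε m u' ω)
          = ∑ l ∈ S, ∑ m ∈ S, Z l * Z m * (ε l u ω * ε m u' ω) := by
        rw [Finset.sum_mul_sum]
        exact Finset.sum_congr rfl (fun l _ => Finset.sum_congr rfl (fun m _ => by ring))
      have h3 : ε i u ω * (∑ m ∈ S, Z m * ε m u' ω)
          = ∑ m ∈ S, Z m * (ε i u ω * ε m u' ω) := by
        rw [Finset.mul_sum]; exact Finset.sum_congr rfl (fun m _ => by ring)
      have h4 : (∑ l ∈ S, Z l * ε l u ω) * ε i' u' ω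
          = ∑ l ∈ S, Z l * (ε l u ω * ε i' u' ω) := by
        rw [Finset.sum_mul]; exact Finset.sum_congr rfl (fun l _ => by ring)
      rw [← h2, ← h3, ← h4]; ring
    rw [hint, hE4]
    have hB : E (fun ω => ∑ m ∈ S, Z m * (ε i u ω * ε m u' ω))
        = ∑ m ∈ S, Z m * (σ2 u * (if u = u' ∧ ∀ j ∈ u, i j = m j then (1:ℝ) else 0)) := by
      rw [hEsum]
      exact Finset.sum_congr rfl (fun m _ => by rw [hEsmul, hcov i m u u' hune hu'ne])
    have hC : E (fun ω => ∑ l ∈ S, Z l * (ε l u ω * ε i' u' ω))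
        = ∑ l ∈ S, Z l * (σ2 u * (if u = u' ∧ ∀ j ∈ u, l j = i' j then (1:ℝ) else 0)) := by
      rw [hEsum]
      exact Finset.sum_congr rfl (fun l _ => by rw [hEsmul, hcov l i' u u' hune hu'ne])
    have hD : E (fun ω => ∑ l ∈ S, ∑ m ∈ S, Z l * Z m * (ε l u ω * ε m u' ω))
        = ∑ l ∈ S, ∑ m ∈ S, Z l * Z m * (σ2 u * (if u = u' ∧ ∀ j ∈ u, l j = m j then (1:ℝ) else 0)) := by
      rw [hEsum]
      refine Finset.sum_congr rfl (fun l _ => ?_)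
      rw [hEsum]
      exact Finset.sum_congr rfl (fun m _ => by rw [hEsmul, hcov l m u u' hune hu'ne])
    rw [hEsmul, hEsmul, hEsmul, hEsmul, hB, hC, hD, hcov i i' u u' hune hu'ne]
    by_cases h : u = u'
    · subst h
      simp only [eq_self_iff_true, true_and, if_true]
      have e1 : ∑ m ∈ S, Z m * (σ2 u * (if ∀ j ∈ u, i j = m j then (1:ℝ) else 0))
          = σ2 u * Nmatch i u := by
        rw [hNm, Finset.mul_sum]
        exact Finset.sum_congr rfl (fun m _ => by ring)
      have e2 : ∑ l ∈ S, Z l * (σ2 u * (if ∀ j ∈ u, l j = i' j then (1:ℝ) else 0))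
          = σ2 u * Nmatch i' u := by
        rw [hNm, Finset.mul_sum]
        refine Finset.sum_congr rfl (fun l _ => ?_)
        have : (if ∀ j ∈ u, l j = i' j then (1:ℝ) else 0) = (if ∀ j ∈ u, i' j = l j then (1:ℝ) else 0) := by
          refine if_congr ?_ rfl rfl
          constructor <;> · intro h j hj; exact (h j hj).symm
        rw [this]; ring
      have e3 : ∑ l ∈ S, ∑ m ∈ S, Z l * Z m * (σ2 u * (if ∀ j ∈ u, l j = m j then (1:ℝ) else 0))
          = σ2 u * (N * ν u) := by
        have : ∀ l, ∑ m ∈ S, Z l * Z m * (σ2 u * (if ∀ j ∈ u, l j = m j then (1:ℝ) else 0))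
            = σ2 u * (Z l * Nmatch l u) := by
          intro l
          rw [hNm, Finset.mul_sum, Finset.mul_sum]
          exact Finset.sum_congr rfl (fun m _ => by ring)
        rw [Finset.sum_congr rfl (fun l _ => this l), ← Finset.mul_sum]
        have : ∑ l ∈ S, Z l * Nmatch l u = N * ν u := by
          rw [hνS]; field_simp
        rw [this]
      rw [e1, e2, e3]
      split_ifs <;> (field_simp; try ring)
    · simp [h]
  -- expectation of Y i * Y i'
  have hEYY : ∀ i i', E (fun ω => (X i ω - Xbar ω) * (X i' ω - Xbar ω))
      = ∑ u ∈ U, σ2 u * ((if ∀ j ∈ u, i j = i' j then (1:ℝ) else 0)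
          - (1/N) * Nmatch i u - (1/N) * Nmatch i' u + (1/N) * ν u) := by
    intro i i'
    have h1 : (fun ω => (X i ω - Xbar ω) * (X i' ω - Xbar ω))
        = fun ω => ∑ u ∈ U, ∑ u' ∈ U,
            ((ε i u ω - (1/N) * ∑ l ∈ S, Z l * ε l u ω)
              * (ε i' u' ω - (1/N) * ∑ m ∈ S, Z m * ε m u' ω)) := by
      funext ω
      rw [hY i ω, hY i' ω, Finset.sum_mul_sum]
    rw [h1, hEsum]
    refine Finset.sum_congr rfl (fun u hu => ?_)
    rw [hEsum, Finset.sum_congr rfl (fun u' hu' => hEprod i i' u hu u' hu'),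
      Finset.sum_ite_eq U u (fun _ => σ2 u * ((if ∀ j ∈ u, i j = i' j then (1:ℝ) else 0)
          - (1/N) * Nmatch i u - (1/N) * Nmatch i' u + (1/N) * ν u)), if_pos hu]
  -- indicator expansion of the power
  have hpow : ∀ i i' : Fin r → ℕ,
      (1+τ2) ^ (Finset.univ.filter (fun j => i j = i' j)).card
        = ∑ k ∈ Finset.range (r+1), (1+τ2)^k *
            (if (Finset.univ.filter (fun j => i j = i' j)).card = k then (1:ℝ) else 0) := by
    intro i i'
    rw [Finset.sum_eq_single_of_mem ((Finset.univ.filter (fun j => i j = i' j)).card)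
      (Finset.mem_range.mpr (Nat.lt_succ_of_le ((Finset.card_filter_le _ _).trans (by simp))))]
    · simp
    · intro k _ hk; rw [if_neg (by omega)]; ring
  -- the per-(u,k) double-sum identity
  have hkey : ∀ (u : Finset (Fin r)) (k : ℕ),
      ∑ i ∈ S, ∑ i' ∈ S, Z i * Z i' *
          (if (Finset.univ.filter (fun j => i j = i' j)).card = k then (1:ℝ) else 0) *
          ((if ∀ j ∈ u, i j = i' j then (1:ℝ) else 0)
            - (1/N) * Nmatch i u - (1/N) * Nmatch i' u + (1/N) * ν u)
      = N * νk k u - (1/N) * (N^2 * νt k u) - (1/N) * (N^2 * νt k u)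
          + (1/N) * (ν u * (N^2 * ρ k)) := by
    intro u k
    have step1 : ∑ i ∈ S, ∑ i' ∈ S, Z i * Z i' *
          (if (Finset.univ.filter (fun j => i j = i' j)).card = k then (1:ℝ) else 0) *
          ((if ∀ j ∈ u, i j = i' j then (1:ℝ) else 0)
            - (1/N) * Nmatch i u - (1/N) * Nmatch i' u + (1/N) * ν u)
        = ∑ i ∈ S, ∑ i' ∈ S,
            (Z i * Z i' * ((if (Finset.univ.filter (fun j => i j = i' j)).card = k then (1:ℝ) else 0)
                * (if ∀ j ∈ u, i j = i' j then (1:ℝ) else 0))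
              - (1/N) * (Z i * Z i' * ((if (Finset.univ.filter (fun j => i j = i' j)).card = k then (1:ℝ) else 0) * Nmatch i u))
              - (1/N) * (Z i * Z i' * ((if (Finset.univ.filter (fun j => i j = i' j)).card = k then (1:ℝ) else 0) * Nmatch i' u))
              + (1/N) * (ν u * (Z i * Z i' * (if (Finset.univ.filter (fun j => i j = i' j)).card = k then (1:ℝ) else 0)))) := by
      exact Finset.sum_congr rfl (fun i _ => Finset.sum_congr rfl (fun i' _ => by ring))
    rw [step1]
    simp only [Finset.sum_sub_distrib, Finset.sum_add_distrib, ← Finset.mul_sum]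
    have hD1 : ∑ i ∈ S, ∑ i' ∈ S, Z i * Z i' *
          ((if (Finset.univ.filter (fun j => i j = i' j)).card = k then (1:ℝ) else 0)
            * (if ∀ j ∈ u, i j = i' j then (1:ℝ) else 0))
        = N * νk k u := by
      rw [hνkS]
      have : ∀ i i' : Fin r → ℕ,
          (if (Finset.univ.filter (fun j => i j = i' j)).card = k then (1:ℝ) else 0)
            * (if ∀ j ∈ u, i j = i' j then (1:ℝ) else 0)
          = (if (Finset.univ.filter (fun j => i j = i' j)).card = k ∧ ∀ j ∈ u, i j = i' j
              then (1:ℝ) else 0) := by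
        intro i i'
        by_cases hA : (Finset.univ.filter (fun j => i j = i' j)).card = k <;>
          by_cases hB : ∀ j ∈ u, i j = i' j <;> simp [hA, hB]
      rw [Finset.sum_congr rfl (fun i _ => Finset.sum_congr rfl (fun i' _ => by rw [this i i']))]
      field_simp
    have hD2 : ∑ i ∈ S, ∑ i' ∈ S, Z i * Z i' *
          ((if (Finset.univ.filter (fun j => i j = i' j)).card = k then (1:ℝ) else 0) * Nmatch i u)
        = N^2 * νt k u := by
      have : ∀ i, ∑ i' ∈ S, Z i * Z i' *
            ((if (Finset.univ.filter (fun j => i j = i' j)).card = k then (1:ℝ) else 0) * Nmatch i u)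
          = Z i * Nmatch i u * NmatchK i k := by
        intro i
        rw [hNK i k, Finset.mul_sum]
        exact Finset.sum_congr rfl (fun i' _ => by ring)
      rw [Finset.sum_congr rfl (fun i _ => this i), hνtS]
      field_simp
    have hD3 : ∑ i ∈ S, ∑ i' ∈ S, Z i * Z i' *
          ((if (Finset.univ.filter (fun j => i j = i' j)).card = k then (1:ℝ) else 0) * Nmatch i' u)
        = N^2 * νt k u := by
      rw [Finset.sum_comm]
      have : ∀ i', ∑ i ∈ S, Z i * Z i' *
            ((if (Finset.univ.filter (fun j => i j = i' j)).card = k then (1:ℝ) else 0) * Nmatch i' u)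
          = Z i' * Nmatch i' u * NmatchK i' k := by
        intro i'
        rw [hNK i' k, Finset.mul_sum]
        refine Finset.sum_congr rfl (fun i _ => ?_)
        have hsym : (Finset.univ.filter (fun j => i j = i' j)) = (Finset.univ.filter (fun j => i' j = i j)) := by
          ext j; simp only [Finset.mem_filter, Finset.mem_univ, true_and]; exact eq_comm
        rw [hsym]; ring
      rw [Finset.sum_congr rfl (fun i' _ => this i'), hνtS]
      field_simp
    have hD4 : ∑ i ∈ S, ∑ i' ∈ S, Z i * Z i' *
          (if (Finset.univ.filter (fun j => i j = i' j)).card = k then (1:ℝ) else 0)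
        = N^2 * ρ k := by
      have : ∀ i, ∑ i' ∈ S, Z i * Z i' *
            (if (Finset.univ.filter (fun j => i j = i' j)).card = k then (1:ℝ) else 0)
          = Z i * NmatchK i k := by
        intro i
        rw [hNK i k, Finset.mul_sum]
        exact Finset.sum_congr rfl (fun i' _ => by ring)
      rw [Finset.sum_congr rfl (fun i _ => this i), hρS]
      field_simp
    rw [hD1, hD2, hD3, hD4]
  -- the per-u identity
  have hGu : ∀ u ∈ U, (1/N^2) * ∑ i ∈ S, ∑ i' ∈ S, Z i * Z i' *
        (1+τ2) ^ (Finset.univ.filter (fun j => i j = i' j)).card *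
        ((if ∀ j ∈ u, i j = i' j then (1:ℝ) else 0)
          - (1/N) * Nmatch i u - (1/N) * Nmatch i' u + (1/N) * ν u)
      = (1/N) * γ u := by
    intro u _
    have step1 : ∀ i i' : Fin r → ℕ, Z i * Z i' *
          (1+τ2) ^ (Finset.univ.filter (fun j => i j = i' j)).card *
          ((if ∀ j ∈ u, i j = i' j then (1:ℝ) else 0)
            - (1/N) * Nmatch i u - (1/N) * Nmatch i' u + (1/N) * ν u)
        = ∑ k ∈ Finset.range (r+1), (1+τ2)^k * (Z i * Z i' *
            (if (Finset.univ.filter (fun j => i j = i' j)).card = k then (1:ℝ) else 0) *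
            ((if ∀ j ∈ u, i j = i' j then (1:ℝ) else 0)
              - (1/N) * Nmatch i u - (1/N) * Nmatch i' u + (1/N) * ν u)) := by
      intro i i'
      rw [hpow i i', Finset.mul_sum, Finset.sum_mul]
      exact Finset.sum_congr rfl (fun kk _ => by ring)
    rw [Finset.sum_congr rfl (fun i _ => Finset.sum_congr rfl (fun i' _ => step1 i i'))]
    rw [Finset.sum_congr rfl (fun i (_ : i ∈ S) => Finset.sum_comm), Finset.sum_comm]
    simp only [← Finset.mul_sum]
    rw [hγ, Finset.mul_sum, Finset.mul_sum]
    refine Finset.sum_congr rfl (fun k _ => ?_)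
    rw [hkey u k]
    field_simp
    ring
  -- main computation
  have hInt : (fun ω => ∑ᶠ i, ∑ᶠ i', Z i * Z i' *
        (1 + τ2) ^ (Finset.univ.filter (fun j => i j = i' j)).card *
        ((X i ω - Xbar ω) * (X i' ω - Xbar ω)))
      = fun ω => ∑ i ∈ S, ∑ i' ∈ S, Z i * Z i' *
        ((1 + τ2) ^ (Finset.univ.filter (fun j => i j = i' j)).card *
        ((X i ω - Xbar ω) * (X i' ω - Xbar ω))) := by
    funext ω
    rw [← hfs2 (fun i i' => (1 + τ2) ^ (Finset.univ.filter (fun j => i j = i' j)).card *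
        ((X i ω - Xbar ω) * (X i' ω - Xbar ω)))]
    exact finsum_congr (fun i => finsum_congr (fun i' => by ring))
  rw [hInt, hEsum]
  have hEin : ∀ i ∈ S, E (fun ω => ∑ i' ∈ S, Z i * Z i' *
        ((1 + τ2) ^ (Finset.univ.filter (fun j => i j = i' j)).card *
        ((X i ω - Xbar ω) * (X i' ω - Xbar ω))))
      = ∑ i' ∈ S, Z i * Z i' * (1 + τ2) ^ (Finset.univ.filter (fun j => i j = i' j)).card *
          E (fun ω => (X i ω - Xbar ω) * (X i' ω - Xbar ω)) := by
    intro i _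
    rw [hEsum]
    refine Finset.sum_congr rfl (fun i' _ => ?_)
    rw [hEsmul (Z i * Z i') (fun ω => (1 + τ2) ^ (Finset.univ.filter (fun j => i j = i' j)).card *
        ((X i ω - Xbar ω) * (X i' ω - Xbar ω))),
      hEsmul ((1 + τ2) ^ (Finset.univ.filter (fun j => i j = i' j)).card)
        (fun ω => (X i ω - Xbar ω) * (X i' ω - Xbar ω))]
    ring
  rw [Finset.sum_congr rfl hEin]
  rw [Finset.sum_congr rfl (fun i (_ : i ∈ S) => Finset.sum_congr rfl
    (fun i' (_ : i' ∈ S) => by rw [hEYY i i']))]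
  have swap : ∀ i i' : Fin r → ℕ, Z i * Z i' *
        (1 + τ2) ^ (Finset.univ.filter (fun j => i j = i' j)).card *
        (∑ u ∈ U, σ2 u * ((if ∀ j ∈ u, i j = i' j then (1:ℝ) else 0)
          - (1/N) * Nmatch i u - (1/N) * Nmatch i' u + (1/N) * ν u))
      = ∑ u ∈ U, σ2 u * (Z i * Z i' *
          (1 + τ2) ^ (Finset.univ.filter (fun j => i j = i' j)).card *
          ((if ∀ j ∈ u, i j = i' j then (1:ℝ) else 0)
            - (1/N) * Nmatch i u - (1/N) * Nmatch i' u + (1/N) * ν u)) := by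
    intro i i'
    rw [Finset.mul_sum]
    exact Finset.sum_congr rfl (fun u _ => by ring)
  rw [Finset.sum_congr rfl (fun i (_ : i ∈ S) => Finset.sum_congr rfl
    (fun i' (_ : i' ∈ S) => swap i i'))]
  rw [Finset.sum_congr rfl (fun i (_ : i ∈ S) => Finset.sum_comm), Finset.sum_comm]
  simp only [← Finset.mul_sum]
  rw [Finset.mul_sum, Finset.mul_sum]
  refine Finset.sum_congr rfl (fun u hu => ?_)
  rw [mul_left_comm, hGu u hu]
  ring
end

section
/- Under the random effects model with naive independent reweighting (W_i i.i.d. with mean 1, variance τ²), the expected delta-method bootstrap variance (1/N²)E_RE E_W((T* − X̄N*)²), with T* = ∑_i W_i Z_i X_i and N* = ∑_i W_i Z_i, equals (τ²/N)∑_{u≠∅} σ²_u (1 − ν_u/N). -/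
/-!
Given the data, `T* − X̄ N* = ∑ Z_i (X_i − X̄) W_i` is a linear form in the weights whose
coefficients sum to zero, so the constant part of `E(W_i W_j) = 1 + τ² 1{i = j}` drops out and
`E_W((T* − X̄ N*)²) = τ² ∑ Z_i (X_i − X̄)²` (using `Z_i² = Z_i`). With `A_i = X_i − μ`, the weighted
sum of squared deviations is `∑ Z_i A_i² − (∑ Z_i A_i)² / N`, and orthogonality of the random
effects gives `E(A_i A_j) = ∑_u σ²_u 1{i_u = j_u}`; summing against `Z_i Z_j` produces the
matching counts, so `E_RE ∑ Z_i (X_i − X̄)² = ∑_u σ²_u (N − ν_u)`.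
-/

open Finset

lemma finsum_eq_sum_of_support_subset_of_imp {α M M' : Type*} [AddCommMonoid M] [Zero M']
    {f : α → M'} {g : α → M} {s : Finset α} (hs : Function.support f ⊆ s)
    (h : ∀ i, f i = 0 → g i = 0) : ∑ᶠ i, g i = ∑ i ∈ s, g i :=
  finsum_eq_sum_of_support_subset g fun i hi => hs (mt (h i) hi)

section WeightedMean

variable {ι : Type*} (s : Finset ι) (Z a : ι → ℝ) {N : ℝ}

lemma sum_mul_sub_weightedMean (hN : ∑ i ∈ s, Z i = N) (hN0 : N ≠ 0) :
    ∑ i ∈ s, Z i * (a i - (∑ j ∈ s, Z j * a j) / N) = 0 := by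
  simp_rw [mul_sub, sum_sub_distrib, ← sum_mul, hN]
  field_simp
  ring

lemma sum_mul_sub_weightedMean_sq (hN : ∑ i ∈ s, Z i = N) (hN0 : N ≠ 0) :
    ∑ i ∈ s, Z i * (a i - (∑ j ∈ s, Z j * a j) / N) ^ 2
      = ∑ i ∈ s, Z i * (a i * a i) - (∑ i ∈ s, Z i * a i) ^ 2 / N := by
  have hexpand : ∀ i ∈ s, Z i * (a i - (∑ j ∈ s, Z j * a j) / N) ^ 2
      = Z i * (a i * a i) - 2 * (∑ j ∈ s, Z j * a j) / N * (Z i * a i)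
        + ((∑ j ∈ s, Z j * a j) / N) ^ 2 * Z i := fun i _ => by ring
  rw [sum_congr rfl hexpand, sum_add_distrib, sum_sub_distrib, ← mul_sum, ← mul_sum, hN]
  field_simp
  ring

end WeightedMean

section LinearFunctional

variable {Ω ι κ : Type*} (E : (Ω → ℝ) →ₗ[ℝ] ℝ)

lemma LinearMap.map_fun_sum_s11 (s : Finset ι) (f : ι → Ω → ℝ) :
    E (fun ω => ∑ i ∈ s, f i ω) = ∑ i ∈ s, E (f i) := by
  rw [← Finset.sum_fn, map_sum]

lemma LinearMap.map_fun_const_mul (c : ℝ) (f : Ω → ℝ) :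
    E (fun ω => c * f ω) = c * E f :=
  E.map_smul c f

lemma LinearMap.map_fun_sub (f g : Ω → ℝ) :
    E (fun ω => f ω - g ω) = E f - E g :=
  E.map_sub f g

lemma LinearMap.map_sq_sum_mul (s : Finset ι) (c : ι → ℝ) (V : ι → Ω → ℝ) :
    E (fun ω => (∑ i ∈ s, c i * V i ω) ^ 2)
      = ∑ i ∈ s, ∑ j ∈ s, c i * c j * E (fun ω => V i ω * V j ω) := by
  have hexpand : (fun ω => (∑ i ∈ s, c i * V i ω) ^ 2)
      = fun ω => ∑ i ∈ s, ∑ j ∈ s, c i * c j * (V i ω * V j ω) := by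
    funext ω
    rw [sq, sum_mul_sum]
    exact sum_congr rfl fun i _ => sum_congr rfl fun j _ => by ring
  simp only [hexpand, E.map_fun_sum_s11, E.map_fun_const_mul]

lemma LinearMap.map_sq_sum_mul_of_cov [DecidableEq ι] (W : ι → Ω → ℝ) (τ2 : ℝ)
    (hW : ∀ i j, E (fun ω => W i ω * W j ω) = 1 + τ2 * if i = j then 1 else 0)
    (s : Finset ι) (c : ι → ℝ) :
    E (fun ω => (∑ i ∈ s, c i * W i ω) ^ 2)
      = (∑ i ∈ s, c i) ^ 2 + τ2 * ∑ i ∈ s, c i ^ 2 := by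
  simp_rw [E.map_sq_sum_mul, hW, mul_add, mul_one, sum_add_distrib, ← sum_mul_sum, ← sq]
  simp_rw [mul_ite, mul_one, mul_zero, sum_ite_eq, mul_sum]
  exact congrArg _ (sum_congr rfl fun i hi => by rw [if_pos hi]; ring)

lemma LinearMap.map_sum_mul_sum_of_orthogonal [DecidableEq κ] (U : Finset κ)
    (f g : κ → Ω → ℝ) (σ2 : κ → ℝ) (p : κ → Prop) [DecidablePred p]
    (h : ∀ u ∈ U, ∀ v ∈ U,
      E (fun ω => f u ω * g v ω) = σ2 u * if u = v ∧ p u then 1 else 0) :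
    E (fun ω => (∑ u ∈ U, f u ω) * ∑ v ∈ U, g v ω) = ∑ u ∈ U, σ2 u * if p u then 1 else 0 := by
  simp_rw [sum_mul_sum, E.map_fun_sum_s11]
  refine sum_congr rfl fun u hu => ?_
  rw [sum_congr rfl (h u hu)]
  simp_rw [ite_and, ← mul_sum, sum_ite_eq, if_pos hu]

lemma LinearMap.map_sq_reweighted_deviation [DecidableEq ι] (W : ι → Ω → ℝ) (τ2 : ℝ)
    (hW : ∀ i j, E (fun ω => W i ω * W j ω) = 1 + τ2 * if i = j then 1 else 0)
    {s : Finset ι} {Z : ι → ℝ} (hs : Function.support Z ⊆ s)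
    (hZ01 : ∀ i ∈ s, Z i = 0 ∨ Z i = 1) (x : ι → ℝ) (xbar : ℝ)
    (hcentered : ∑ i ∈ s, Z i * (x i - xbar) = 0) :
    E (fun ω => ((∑ᶠ i, W i ω * Z i * x i) - xbar * ∑ᶠ i, W i ω * Z i) ^ 2)
      = τ2 * ∑ i ∈ s, Z i * (x i - xbar) ^ 2 := by
  have hlin : ∀ ω, (∑ᶠ i, W i ω * Z i * x i) - xbar * ∑ᶠ i, W i ω * Z i
      = ∑ i ∈ s, Z i * (x i - xbar) * W i ω := fun ω => by
    rw [finsum_eq_sum_of_support_subset_of_imp hs fun i h => by simp [h],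
      finsum_eq_sum_of_support_subset_of_imp hs fun i h => by simp [h], mul_sum,
      ← sum_sub_distrib]
    exact sum_congr rfl fun i _ => by ring
  simp_rw [hlin, E.map_sq_sum_mul_of_cov W τ2 hW, hcentered, zero_pow two_ne_zero, zero_add]
  exact congrArg _ (sum_congr rfl fun i hi => by rcases hZ01 i hi with h | h <;> simp [h])

lemma LinearMap.map_sum_mul_sub_weightedMean_sq (s : Finset ι) (Z : ι → ℝ) {N : ℝ}
    (hN : ∑ i ∈ s, Z i = N) (hN0 : N ≠ 0) (A : ι → Ω → ℝ) :
    E (fun ω => ∑ i ∈ s, Z i * (A i ω - (∑ j ∈ s, Z j * A j ω) / N) ^ 2)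
      = ∑ i ∈ s, Z i * E (fun ω => A i ω * A i ω)
        - (∑ i ∈ s, ∑ j ∈ s, Z i * Z j * E (fun ω => A i ω * A j ω)) / N := by
  simp_rw [sum_mul_sub_weightedMean_sq s Z _ hN hN0, div_eq_inv_mul, E.map_fun_sub,
    E.map_fun_sum_s11, E.map_fun_const_mul, E.map_sq_sum_mul]

lemma LinearMap.map_sum_mul_sub_weightedMean_sq_of_orthogonal [DecidableEq κ]
    (s : Finset ι) (Z : ι → ℝ) {N : ℝ} (hN : ∑ i ∈ s, Z i = N) (hN0 : N ≠ 0)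
    (U : Finset κ) (f : ι → κ → Ω → ℝ) (σ2 : κ → ℝ)
    (p : ι → ι → κ → Prop) [∀ i j, DecidablePred (p i j)] (hp : ∀ i u, p i i u)
    (hcov : ∀ i j, ∀ u ∈ U, ∀ v ∈ U,
      E (fun ω => f i u ω * f j v ω) = σ2 u * if u = v ∧ p i j u then 1 else 0) :
    E (fun ω => ∑ i ∈ s, Z i *
        (∑ u ∈ U, f i u ω - (∑ j ∈ s, Z j * ∑ u ∈ U, f j u ω) / N) ^ 2)
      = ∑ u ∈ U, σ2 u *
          (N - (∑ i ∈ s, Z i * ∑ j ∈ s, Z j * if p i j u then 1 else 0) / N) := by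
  have hK : ∀ i j, E (fun ω => (∑ u ∈ U, f i u ω) * ∑ v ∈ U, f j v ω)
      = ∑ u ∈ U, σ2 u * if p i j u then 1 else 0 := fun i j =>
    E.map_sum_mul_sum_of_orthogonal U _ _ σ2 _ (hcov i j)
  rw [E.map_sum_mul_sub_weightedMean_sq s Z hN hN0]
  simp_rw [hK, hp, if_true, mul_one, ← sum_mul, hN, mul_sub, sum_sub_distrib, mul_div_assoc',
    ← sum_div, mul_sum]
  congr 1
  · exact sum_congr rfl fun _ _ => mul_comm _ _
  · rw [sum_congr rfl fun _ _ => sum_comm, sum_comm]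
    exact congrArg (· / N) (sum_congr rfl fun u _ => sum_congr rfl fun i _ =>
      sum_congr rfl fun j _ => by ring)

end LinearFunctional

theorem stmt11_general {r : ℕ} {ΩX ΩW : Type*}
    (EX : (ΩX → ℝ) →ₗ[ℝ] ℝ)
    (EW : (ΩW → ℝ) →ₗ[ℝ] ℝ)
    (Z : (Fin r → ℕ) → ℝ)
    (hZ01 : ∀ i, Z i = 0 ∨ Z i = 1)
    (hZfin : (Function.support Z).Finite)
    (N : ℝ) (hN : N = ∑ᶠ i, Z i) (hNpos : 0 < N)
    (μ : ℝ) (σ2 : Finset (Fin r) → ℝ) (τ2 : ℝ)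
    (ε : (Fin r → ℕ) → Finset (Fin r) → ΩX → ℝ)
    (hcov : ∀ i i' u u', u.Nonempty → u'.Nonempty →
      EX (fun ω => ε i u ω * ε i' u' ω)
        = σ2 u * (if u = u' ∧ ∀ j ∈ u, i j = i' j then (1 : ℝ) else 0))
    (X : (Fin r → ℕ) → ΩX → ℝ)
    (hX : ∀ i ω, X i ω = μ + ∑ u ∈ Finset.univ.erase (∅ : Finset (Fin r)), ε i u ω)
    (Xbar : ΩX → ℝ)
    (hXbar : ∀ ω, Xbar ω = (1 / N) * ∑ᶠ i, Z i * X i ω)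
    (Nmatch : (Fin r → ℕ) → Finset (Fin r) → ℝ)
    (hNmatch : ∀ i u, Nmatch i u
      = ∑ᶠ i', Z i' * (if ∀ j ∈ u, i j = i' j then (1 : ℝ) else 0))
    (ν : Finset (Fin r) → ℝ)
    (hν : ∀ u, ν u = (1 / N) * ∑ᶠ i, Z i * Nmatch i u)
    (W : (Fin r → ℕ) → ΩW → ℝ)
    (hWcov : ∀ i i', EW (fun ω => W i ω * W i' ω)
        = 1 + τ2 * (if i = i' then (1 : ℝ) else 0)) :
    (1 / N ^ 2) * EX (fun ωx => EW (fun ωw =>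
        ((∑ᶠ i, W i ωw * Z i * X i ωx) - Xbar ωx * ∑ᶠ i, W i ωw * Z i) ^ 2))
      = (τ2 / N) * ∑ u ∈ Finset.univ.erase (∅ : Finset (Fin r)),
          σ2 u * (1 - ν u / N) := by
  obtain ⟨S, hS⟩ : ∃ S : Finset (Fin r → ℕ), Function.support Z ⊆ S :=
    ⟨hZfin.toFinset, by simp⟩
  have hNS : ∑ i ∈ S, Z i = N :=
    (hN.trans (finsum_eq_sum_of_support_subset_of_imp hS fun _ => id)).symm
  have hN0 : N ≠ 0 := hNpos.ne'
  set U := univ.erase (∅ : Finset (Fin r))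
  have hdev : ∀ i ω, X i ω - Xbar ω
      = ∑ u ∈ U, ε i u ω - (∑ j ∈ S, Z j * ∑ u ∈ U, ε j u ω) / N := fun i ω => by
    rw [hXbar, finsum_eq_sum_of_support_subset_of_imp hS fun j h => by simp [h]]
    simp_rw [hX, mul_add, sum_add_distrib, ← sum_mul, hNS]
    field_simp
    ring
  have hboot : ∀ ωx, EW (fun ωw =>
      ((∑ᶠ i, W i ωw * Z i * X i ωx) - Xbar ωx * ∑ᶠ i, W i ωw * Z i) ^ 2)
      = τ2 * ∑ i ∈ S, Z i * (X i ωx - Xbar ωx) ^ 2 := fun ωx =>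
    EW.map_sq_reweighted_deviation W τ2 hWcov hS (fun i _ => hZ01 i) _ _ <| by
      simp_rw [hdev]
      exact sum_mul_sub_weightedMean S Z _ hNS hN0
  have hcount : ∀ u, ∑ i ∈ S, Z i * ∑ j ∈ S, Z j * (if ∀ k ∈ u, i k = j k then 1 else 0)
      = N * ν u := fun u => by
    rw [hν, ← mul_assoc, mul_one_div_cancel hN0, one_mul,
      finsum_eq_sum_of_support_subset_of_imp hS fun i h => by simp [h]]
    refine sum_congr rfl fun i _ => ?_
    rw [hNmatch, finsum_eq_sum_of_support_subset_of_imp hS fun j h => by simp [h]]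
  simp_rw [hboot, EX.map_fun_const_mul, hdev]
  rw [EX.map_sum_mul_sub_weightedMean_sq_of_orthogonal S Z hNS hN0 U ε σ2 _ (fun _ _ _ _ => rfl)
    fun i j u hu v hv => hcov i j u v (nonempty_iff_ne_empty.2 (ne_of_mem_erase hu))
      (nonempty_iff_ne_empty.2 (ne_of_mem_erase hv))]
  simp_rw [hcount, mul_sum]
  exact sum_congr rfl fun u _ => by field_simp

/-- Theorem 3 (naive reweighting): with i.i.d. weights of mean 1 and variance `τ²`
(independent of the data), the expected delta-method bootstrap variance
`(1/N²) E_RE E_W((T* − X̄ N*)²)` equals `(τ²/N) ∑_{u≠∅} σ²_u (1 − ν_u/N)`. -/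
theorem stmt11 {r : ℕ} (hr : 1 ≤ r) {ΩX ΩW : Type*}
    (EX : (ΩX → ℝ) →ₗ[ℝ] ℝ) (hEX1 : EX (fun _ => 1) = 1)
    (EW : (ΩW → ℝ) →ₗ[ℝ] ℝ) (hEW1 : EW (fun _ => 1) = 1)
    (Z : (Fin r → ℕ) → ℝ)
    (hZ01 : ∀ i, Z i = 0 ∨ Z i = 1)
    (hZfin : (Function.support Z).Finite)
    (N : ℝ) (hN : N = ∑ᶠ i, Z i) (hNpos : 0 < N)
    (μ : ℝ) (σ2 : Finset (Fin r) → ℝ) (τ2 : ℝ)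
    (ε : (Fin r → ℕ) → Finset (Fin r) → ΩX → ℝ)
    (hdep : ∀ i i' u, (∀ j ∈ u, i j = i' j) → ε i u = ε i' u)
    (hmean : ∀ i u, u.Nonempty → EX (ε i u) = 0)
    (hcov : ∀ i i' u u', u.Nonempty → u'.Nonempty →
      EX (fun ω => ε i u ω * ε i' u' ω)
        = σ2 u * (if u = u' ∧ ∀ j ∈ u, i j = i' j then (1 : ℝ) else 0))
    (X : (Fin r → ℕ) → ΩX → ℝ)
    (hX : ∀ i ω, X i ω = μ + ∑ u ∈ Finset.univ.erase (∅ : Finset (Fin r)), ε i u ω)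
    (Xbar : ΩX → ℝ)
    (hXbar : ∀ ω, Xbar ω = (1 / N) * ∑ᶠ i, Z i * X i ω)
    (Nmatch : (Fin r → ℕ) → Finset (Fin r) → ℝ)
    (hNmatch : ∀ i u, Nmatch i u
      = ∑ᶠ i', Z i' * (if ∀ j ∈ u, i j = i' j then (1 : ℝ) else 0))
    (ν : Finset (Fin r) → ℝ)
    (hν : ∀ u, ν u = (1 / N) * ∑ᶠ i, Z i * Nmatch i u)
    (W : (Fin r → ℕ) → ΩW → ℝ)
    (hWmean : ∀ i, EW (W i) = 1)
    (hWcov : ∀ i i', EW (fun ω => W i ω * W i' ω)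
        = 1 + τ2 * (if i = i' then (1 : ℝ) else 0)) :
    (1 / N ^ 2) * EX (fun ωx => EW (fun ωw =>
        ((∑ᶠ i, W i ωw * Z i * X i ωx) - Xbar ωx * ∑ᶠ i, W i ωw * Z i) ^ 2))
      = (τ2 / N) * ∑ u ∈ Finset.univ.erase (∅ : Finset (Fin r)),
          σ2 u * (1 - ν u / N) :=
  stmt11_general EX EW Z hZ01 hZfin N hN hNpos μ σ2 τ2 ε hcov X hX Xbar hXbar Nmatch hNmatch ν hν W
    hWcov
end

section
/- For i.i.d. weights W_i with mean 1, variance τ², and kurtosis κ (so E(W−1)^4 = (κ+3)τ⁴), and fixed residuals Y_i with ∑_i Z_i Y_i = 0, the single-replicate estimator V̂ = ((1/N)∑_i Z_i W_i Y_i)² satisfies Var_W(V̂) = (σ⁴τ⁴/N²)(2 + κ(κ_x+3)/N), where σ² = (1/N)∑_i Z_i Y_i² and κ_x = (1/N)∑_i Z_i Y_i⁴/σ⁴ − 3. -/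
open MeasureTheory ProbabilityTheory

/-!
Since `∑ Z_i Y_i = 0`, the statistic `(1/N) ∑ Z_i W_i Y_i` equals `S = ∑ b_i X_i` with the
independent centred variables `X_i = W_i - 1` and weights `b_i = Z_i Y_i / N`. Expanding the
powers of `S`, independence kills every cross moment containing some `X_i` to the first power,
so `E S² = τ² ∑ b_i²` and `E S⁴ = 3 τ⁴ (∑ b_i²)² + κ τ⁴ ∑ b_i⁴`. As `Z_i ∈ {0, 1}`,
`∑ b_i² = σ² / N` and `∑ b_i⁴ = σ⁴ (κ_x + 3) / N³`.
-/

lemma mul_pow_of_eq_zero_or_eq_one {M : Type*} [CommMonoidWithZero M] {z : M} (y : M)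
    (hz : z = 0 ∨ z = 1) {k : ℕ} (hk : k ≠ 0) : (z * y) ^ k = z * y ^ k := by
  rcases hz with rfl | rfl <;> simp [zero_pow hk]

section ZeroOneWeights

variable {α : Type*} {Z : α → ℝ} {s : Finset α}

lemma finsum_mul_eq_sum_of_support_subset (hs : Function.support Z ⊆ s) (f : α → ℝ) :
    ∑ᶠ i, Z i * f i = ∑ i ∈ s, Z i * f i :=
  finsum_eq_sum_of_support_subset _ ((Function.support_mul_subset_left _ _).trans hs)

lemma sum_mul_div_pow_eq_finsum (hZ01 : ∀ i, Z i = 0 ∨ Z i = 1) (hs : Function.support Z ⊆ s)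
    {y : α → ℝ} (c : ℝ) {k : ℕ} (hk : k ≠ 0) :
    ∑ i ∈ s, (Z i * y i / c) ^ k = (∑ᶠ i, Z i * y i ^ k) / c ^ k := by
  simp_rw [finsum_mul_eq_sum_of_support_subset hs, Finset.sum_div, div_pow,
    mul_pow_of_eq_zero_or_eq_one _ (hZ01 _) hk]

end ZeroOneWeights

namespace MeasureTheory

variable {Ω : Type*} [MeasurableSpace Ω] {μ : Measure Ω}

lemma memLp_of_integrable_pow {f : Ω → ℝ} {n : ℕ} (hn : Even n) (hn0 : n ≠ 0)
    (hf : AEStronglyMeasurable f μ) (h : Integrable (fun ω => f ω ^ n) μ) :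
    MemLp f n μ := by
  rw [← integrable_norm_rpow_iff hf (by exact_mod_cast hn0) (by simp)]
  simpa [Real.norm_eq_abs, hn.pow_abs] using h

lemma MemLp.integrable_pow_of_le [IsFiniteMeasure μ] {f : Ω → ℝ} {m n : ℕ}
    (hf : MemLp f n μ) (hmn : m ≤ n) : Integrable (fun ω => f ω ^ m) μ := by
  have h := (hf.mono_exponent (by exact_mod_cast hmn : (m : ENNReal) ≤ n)).integrable_norm_pow'
  exact (integrable_norm_iff (hf.1.pow m)).mp (by simpa [norm_pow] using h)

end MeasureTheory

namespace ProbabilityTheory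

variable {Ω : Type*} [MeasurableSpace Ω] {μ : Measure Ω}

lemma IndepFun.integral_add_pow [IsFiniteMeasure μ] {U V : Ω → ℝ} {n : ℕ}
    (hUV : IndepFun U V μ) (hU : MemLp U n μ) (hV : MemLp V n μ) :
    ∫ ω, (U ω + V ω) ^ n ∂μ
      = ∑ m ∈ Finset.range (n + 1),
          (∫ ω, U ω ^ m ∂μ) * (∫ ω, V ω ^ (n - m) ∂μ) * n.choose m := by
  have hpow : ∀ m k : ℕ, IndepFun (fun ω => U ω ^ m) (fun ω => V ω ^ k) μ := fun m k =>
    hUV.comp (measurable_id.pow_const m) (measurable_id.pow_const k)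
  simp_rw [add_pow]
  rw [integral_finsetSum]
  · refine Finset.sum_congr rfl fun m hm => ?_
    rw [integral_mul_const]
    exact congrArg (· * _) ((hpow m (n - m)).integral_mul_eq_mul_integral
      (hU.1.pow m) (hV.1.pow (n - m)))
  · intro m hm
    have hmn : m ≤ n := Nat.lt_succ_iff.mp (Finset.mem_range.mp hm)
    exact ((hpow m (n - m)).integrable_mul (hU.integrable_pow_of_le hmn)
      (hV.integrable_pow_of_le (Nat.sub_le n m))).mul_const _

variable [IsProbabilityMeasure μ] {U V : Ω → ℝ}

lemma IndepFun.integral_add_sq (hUV : IndepFun U V μ) (hU : MemLp U 2 μ)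
    (hV : MemLp V 2 μ) (hV0 : ∫ ω, V ω ∂μ = 0) :
    ∫ ω, (U ω + V ω) ^ 2 ∂μ = ∫ ω, U ω ^ 2 ∂μ + ∫ ω, V ω ^ 2 ∂μ := by
  rw [hUV.integral_add_pow hU hV]
  simp [Finset.sum_range_succ, hV0]
  ring

lemma IndepFun.integral_add_pow_four (hUV : IndepFun U V μ) (hU : MemLp U 4 μ)
    (hV : MemLp V 4 μ) (hU0 : ∫ ω, U ω ∂μ = 0) (hV0 : ∫ ω, V ω ∂μ = 0) :
    ∫ ω, (U ω + V ω) ^ 4 ∂μ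
      = ∫ ω, U ω ^ 4 ∂μ + 6 * (∫ ω, U ω ^ 2 ∂μ) * (∫ ω, V ω ^ 2 ∂μ) + ∫ ω, V ω ^ 4 ∂μ := by
  rw [hUV.integral_add_pow hU hV]
  simp [Finset.sum_range_succ, hU0, hV0, Nat.choose]
  ring

variable {ι : Type*} {X : ι → Ω → ℝ}

lemma iIndepFun.integral_finsetSum_sq (hX : iIndepFun X μ)
    (hL : ∀ i, MemLp (X i) 2 μ) (h0 : ∀ i, ∫ ω, X i ω ∂μ = 0) (s : Finset ι) :
    ∫ ω, (∑ i ∈ s, X i ω) ^ 2 ∂μ = ∑ i ∈ s, ∫ ω, X i ω ^ 2 ∂μ := by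
  classical
  induction s using Finset.induction_on with
  | empty => simp
  | insert i s hi ih =>
    have hind := hX.indepFun_finsetSum_of_notMem₀ (fun j => (hL j).1.aemeasurable) hi
    rw [Finset.sum_fn] at hind
    simp_rw [Finset.sum_insert hi, add_comm (X i _)]
    rw [hind.integral_add_sq (memLp_finsetSum s fun j _ => hL j) (hL i) (h0 i), ih, add_comm]

-- The right-hand side is `∑ E Xᵢ⁴ + 6 ∑_{i<j} E Xᵢ² E Xⱼ²`, written so that adding one summand
-- is a ring identity.
lemma iIndepFun.integral_finsetSum_pow_four (hX : iIndepFun X μ)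
    (hL : ∀ i, MemLp (X i) 4 μ) (h0 : ∀ i, ∫ ω, X i ω ∂μ = 0) (s : Finset ι) :
    ∫ ω, (∑ i ∈ s, X i ω) ^ 4 ∂μ
      = 3 * (∑ i ∈ s, ∫ ω, X i ω ^ 2 ∂μ) ^ 2
        + ∑ i ∈ s, (∫ ω, X i ω ^ 4 ∂μ - 3 * (∫ ω, X i ω ^ 2 ∂μ) ^ 2) := by
  classical
  have hL2 : ∀ i, MemLp (X i) 2 μ := fun i => (hL i).mono_exponent (by norm_num)
  induction s using Finset.induction_on with
  | empty => simp
  | insert i s hi ih =>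
    have hind := hX.indepFun_finsetSum_of_notMem₀ (fun j => (hL j).1.aemeasurable) hi
    rw [Finset.sum_fn] at hind
    simp_rw [Finset.sum_insert hi, add_comm (X i _)]
    rw [hind.integral_add_pow_four (memLp_finsetSum s fun j _ => hL j) (hL i)
      (by rw [integral_finsetSum s fun j _ => (hL j).integrable (by norm_num)]; simp [h0]) (h0 i),
      ih, hX.integral_finsetSum_sq hL2 h0]
    ring

lemma iIndepFun.integral_sq_weightedSum_sq_sub_sq {τ2 κ : ℝ}
    (hX : iIndepFun X μ) (hL : ∀ i, MemLp (X i) 4 μ) (h0 : ∀ i, ∫ ω, X i ω ∂μ = 0)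
    (h2 : ∀ i, ∫ ω, X i ω ^ 2 ∂μ = τ2) (h4 : ∀ i, ∫ ω, X i ω ^ 4 ∂μ = (κ + 3) * τ2 ^ 2)
    (b : ι → ℝ) (s : Finset ι) :
    ∫ ω, ((∑ i ∈ s, b i * X i ω) ^ 2) ^ 2 ∂μ - (∫ ω, (∑ i ∈ s, b i * X i ω) ^ 2 ∂μ) ^ 2
      = τ2 ^ 2 * (2 * (∑ i ∈ s, b i ^ 2) ^ 2 + κ * ∑ i ∈ s, b i ^ 4) := by
  have hbX : iIndepFun (fun i ω => b i * X i ω) μ :=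
    hX.comp (fun i x => b i * x) fun i => measurable_const_mul (b i)
  have hL' : ∀ i, MemLp (fun ω => b i * X i ω) 4 μ := fun i => (hL i).const_mul (b i)
  have h0' : ∀ i, ∫ ω, b i * X i ω ∂μ = 0 := fun i => by rw [integral_const_mul, h0, mul_zero]
  simp_rw [← pow_mul]
  rw [hbX.integral_finsetSum_pow_four hL' h0' s,
    hbX.integral_finsetSum_sq (fun i => (hL' i).mono_exponent (by norm_num)) h0' s]
  have hterm : ∀ i,
      b i ^ 4 * ((κ + 3) * τ2 ^ 2) - 3 * (b i ^ 2 * τ2) ^ 2 = τ2 ^ 2 * κ * b i ^ 4 :=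
    fun i => by ring
  simp_rw [mul_pow, integral_const_mul, h2, h4, hterm, ← Finset.mul_sum, ← Finset.sum_mul]
  ring

end ProbabilityTheory

theorem stmt12_general {r : ℕ} {Ω : Type*} [MeasurableSpace Ω]
    (μp : Measure Ω) [IsProbabilityMeasure μp]
    (Z : (Fin r → ℕ) → ℝ)
    (hZ01 : ∀ i, Z i = 0 ∨ Z i = 1)
    (hZfin : (Function.support Z).Finite)
    (N : ℝ) (hNpos : 0 < N)
    (Y : (Fin r → ℕ) → ℝ)
    (hY0 : ∑ᶠ i, Z i * Y i = 0)
    (σ2 : ℝ) (hσ2 : σ2 = (1 / N) * ∑ᶠ i, Z i * Y i ^ 2) (hσpos : 0 < σ2)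
    (κx : ℝ) (hκx : κx = ((1 / N) * ∑ᶠ i, Z i * Y i ^ 4) / σ2 ^ 2 - 3)
    (τ2 κ : ℝ)
    (W : (Fin r → ℕ) → Ω → ℝ)
    (hmeas : ∀ i, Measurable (W i))
    (hindep : iIndepFun W μp)
    (hint4 : ∀ i, Integrable (fun ω => (W i ω - 1) ^ 4) μp)
    (hWmean : ∀ i, ∫ ω, W i ω ∂μp = 1)
    (hWvar : ∀ i, ∫ ω, (W i ω - 1) ^ 2 ∂μp = τ2)
    (hWkurt : ∀ i, ∫ ω, (W i ω - 1) ^ 4 ∂μp = (κ + 3) * τ2 ^ 2) :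
    (∫ ω, (((1 / N) * ∑ᶠ i, Z i * W i ω * Y i) ^ 2) ^ 2 ∂μp)
        - (∫ ω, ((1 / N) * ∑ᶠ i, Z i * W i ω * Y i) ^ 2 ∂μp) ^ 2
      = (σ2 ^ 2 * τ2 ^ 2 / N ^ 2) * (2 + κ * (κx + 3) / N) := by
  set s := hZfin.toFinset
  have hs : Function.support Z ⊆ s := by simp [s]
  have hS : ∀ ω, (1 / N) * ∑ᶠ i, Z i * W i ω * Y i
      = ∑ i ∈ s, (Z i * Y i / N) * (W i ω - 1) := by
    intro ω
    rw [← sub_zero (∑ᶠ i, Z i * W i ω * Y i), ← hY0]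
    simp only [mul_assoc, finsum_mul_eq_sum_of_support_subset hs]
    rw [← Finset.sum_sub_distrib, Finset.mul_sum]
    exact Finset.sum_congr rfl fun i _ => by ring
  have hXLp : ∀ i, MemLp (fun ω => W i ω - 1) 4 μp := fun i => by
    exact_mod_cast memLp_of_integrable_pow (n := 4) (by decide) (by norm_num)
      ((hmeas i).sub_const 1).aestronglyMeasurable (hint4 i)
  have hX0 : ∀ i, ∫ ω, W i ω - 1 ∂μp = 0 := fun i => by
    have hW : Integrable (W i) μp := integrable_add_const_iff.mp
      (by simpa only [sub_eq_add_neg] using (hXLp i).integrable (by norm_num))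
    rw [integral_sub hW (integrable_const 1), hWmean, integral_const, sub_eq_zero]
    simp
  have hXind : iIndepFun (fun i ω => W i ω - 1) μp :=
    hindep.comp (fun _ x => x - 1) fun _ => measurable_sub_const 1
  have h2 : ∑ i ∈ s, (Z i * Y i / N) ^ 2 = σ2 / N := by
    rw [sum_mul_div_pow_eq_finsum hZ01 hs N two_ne_zero, hσ2]
    field_simp
  have h4 : ∑ i ∈ s, (Z i * Y i / N) ^ 4 = σ2 ^ 2 * (κx + 3) / N ^ 3 := by
    rw [sum_mul_div_pow_eq_finsum hZ01 hs N four_ne_zero, hκx]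
    field_simp
    ring
  simp_rw [hS]
  rw [hXind.integral_sq_weightedSum_sq_sub_sq hXLp hX0 hWvar hWkurt, h2, h4]
  field_simp

/-- Theorem (bootstrap stability, single replicate): for i.i.d. weights with mean 1,
variance `τ²` and kurtosis `κ`, and fixed residuals `Y_i` with `∑_i Z_i Y_i = 0`,
the estimator `V̂ = ((1/N)∑_i Z_i W_i Y_i)²` has
`Var_W(V̂) = (σ⁴τ⁴/N²)(2 + κ(κ_x+3)/N)`. -/
theorem stmt12 {r : ℕ} {Ω : Type*} [MeasurableSpace Ω]
    (μp : Measure Ω) [IsProbabilityMeasure μp]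
    (Z : (Fin r → ℕ) → ℝ)
    (hZ01 : ∀ i, Z i = 0 ∨ Z i = 1)
    (hZfin : (Function.support Z).Finite)
    (N : ℝ) (hN : N = ∑ᶠ i, Z i) (hNpos : 0 < N)
    (Y : (Fin r → ℕ) → ℝ)
    (hY0 : ∑ᶠ i, Z i * Y i = 0)
    (σ2 : ℝ) (hσ2 : σ2 = (1 / N) * ∑ᶠ i, Z i * Y i ^ 2) (hσpos : 0 < σ2)
    (κx : ℝ) (hκx : κx = ((1 / N) * ∑ᶠ i, Z i * Y i ^ 4) / σ2 ^ 2 - 3)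
    (τ2 κ : ℝ)
    (W : (Fin r → ℕ) → Ω → ℝ)
    (hmeas : ∀ i, Measurable (W i))
    (hindep : iIndepFun W μp)
    (hint4 : ∀ i, Integrable (fun ω => (W i ω - 1) ^ 4) μp)
    (hWmean : ∀ i, ∫ ω, W i ω ∂μp = 1)
    (hWvar : ∀ i, ∫ ω, (W i ω - 1) ^ 2 ∂μp = τ2)
    (hWkurt : ∀ i, ∫ ω, (W i ω - 1) ^ 4 ∂μp = (κ + 3) * τ2 ^ 2) :
    (∫ ω, (((1 / N) * ∑ᶠ i, Z i * W i ω * Y i) ^ 2) ^ 2 ∂μp)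
        - (∫ ω, ((1 / N) * ∑ᶠ i, Z i * W i ω * Y i) ^ 2 ∂μp) ^ 2
      = (σ2 ^ 2 * τ2 ^ 2 / N ^ 2) * (2 + κ * (κx + 3) / N) :=
  stmt12_general μp Z hZ01 hZfin N hNpos Y hY0 σ2 hσ2 hσpos κx hκx τ2 κ W hmeas hindep hint4 hWmean
    hWvar hWkurt
end

section
/- In the heteroscedastic model with product weights, E_RE(Ṽar_PW(X̄*)) = (1/N)∑_{u≠∅}∑_i γ_{i,u} σ²_{i,u}, where γ_{i,u} = ∑_{k=0}^r (1+τ²)^k ( ν_{i,k,u} − 2ν_{i,k}ν_{i,u} + \overline{ν_k} ν_{i,u} ). -/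
/-!
Write `M` for the `Z`-weighted mean over the observed cells. Since `X i - X̄ = ∑ᵤ (ε i u - M ε·u)`
and effects with different `u` are uncorrelated, `E((X i - X̄)(X j - X̄))` is the sum over `u` of
the doubly centred kernel `Kᵤ i j - M Kᵤ(i,·) - M Kᵤ(·,j) + M M Kᵤ`, where
`Kᵤ i j = σ²_{i,u} 1{i_u = j_u}`. Averaged against the weight `w i j = (1+τ²)^|M_{ij}|`, the
symmetry of `w` and of `Kᵤ` makes the two singly centred terms equal, and the constant term factors
as `M Kᵤ(i,·) · M M w`. Sorting the cells `j` by the value `k` of `|M_{ij}|` then turns every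
weighted mean of `w` into the `ν` quantities.
-/

open Finset

section WeightedMean

variable {α β 𝕜 V W : Type*} [Field 𝕜] [AddCommGroup V] [Module 𝕜 V] [AddCommGroup W]
  [Module 𝕜 W]

def wmean (S : Finset α) (Z : α → 𝕜) (x : α → V) : V :=
  (∑ a ∈ S, Z a)⁻¹ • ∑ a ∈ S, Z a • x a

variable {S : Finset α} {Z : α → 𝕜}

lemma wmean_add (x y : α → V) :
    wmean S Z (fun a => x a + y a) = wmean S Z x + wmean S Z y := by
  simp only [wmean, smul_add, sum_add_distrib]

lemma wmean_sub (x y : α → V) :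
    wmean S Z (fun a => x a - y a) = wmean S Z x - wmean S Z y := by
  simp only [wmean, smul_sub, sum_sub_distrib]

lemma wmean_zero : wmean S Z (fun _ => (0 : V)) = 0 := by
  simp [wmean]

lemma wmean_sum (s : Finset β) (x : β → α → V) :
    wmean S Z (fun a => ∑ k ∈ s, x k a) = ∑ k ∈ s, wmean S Z (x k) := by
  simp only [wmean, smul_sum]
  rw [sum_comm]

lemma wmean_smul (c : 𝕜) (x : α → V) : wmean S Z (fun a => c • x a) = c • wmean S Z x := by
  simp only [wmean, smul_comm _ c, smul_sum]

lemma wmean_mul_left (c : 𝕜) (f : α → 𝕜) : wmean S Z (fun a => c * f a) = c * wmean S Z f :=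
  wmean_smul c f

lemma wmean_mul_right (c : 𝕜) (f : α → 𝕜) : wmean S Z (fun a => f a * c) = wmean S Z f * c := by
  simp only [mul_comm _ c, wmean_mul_left]

lemma wmean_const (hS : ∑ a ∈ S, Z a ≠ 0) (m : V) : wmean S Z (fun _ => m) = m := by
  rw [wmean, ← sum_smul, smul_smul, inv_mul_cancel₀ hS, one_smul]

lemma wmean_comm (F : α → α → V) :
    wmean S Z (fun i => wmean S Z (F i)) = wmean S Z (fun j => wmean S Z (fun i => F i j)) := by
  simp only [wmean, smul_sum, smul_comm (Z _) (_ : 𝕜)⁻¹]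
  rw [sum_comm]
  exact sum_congr rfl fun _ _ => sum_congr rfl fun _ _ => by rw [smul_comm (Z _)]

lemma wmean_apply {ι : Type*} (x : α → ι → V) (t : ι) :
    wmean S Z x t = wmean S Z (fun a => x a t) := by
  simp [wmean, Finset.sum_apply]

lemma LinearMap.map_wmean (f : V →ₗ[𝕜] W) (x : α → V) :
    f (wmean S Z x) = wmean S Z (fun a => f (x a)) := by
  simp [wmean, map_sum]

lemma LinearMap.map_sub_wmean₂ (B : V →ₗ[𝕜] W →ₗ[𝕜] 𝕜) (x : α → V) (y : α → W) (i j : α) :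
    B (x i - wmean S Z x) (y j - wmean S Z y) =
      B (x i) (y j) - wmean S Z (fun b => B (x i) (y b)) - wmean S Z (fun a => B (x a) (y j))
        + wmean S Z (fun a => wmean S Z (fun b => B (x a) (y b))) := by
  have hleft : ∀ v, B (wmean S Z x) v = wmean S Z (fun a => B (x a) v) := fun v =>
    (B.flip v).map_wmean x
  simp only [map_sub, LinearMap.sub_apply, hleft, (B _).map_wmean]
  abel

lemma wmean_pow_mul (t : 𝕜) (c : α → ℕ) {n : ℕ} (hc : ∀ a, c a ≤ n) (f : α → 𝕜) :
    wmean S Z (fun a => t ^ c a * f a)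
      = ∑ k ∈ range (n + 1), t ^ k * wmean S Z (fun a => if c a = k then f a else 0) := by
  have hsplit : ∀ a, t ^ c a * f a = ∑ k ∈ range (n + 1), t ^ k * (if c a = k then f a else 0) :=
    fun a => by simp [mul_ite, Nat.lt_succ_of_le (hc a)]
  simp only [hsplit, wmean_sum, wmean_mul_left]

lemma wmean_wmean_mul_centered (w C : α → α → 𝕜) (hw : ∀ a b, w a b = w b a)
    (hC : ∀ a b, C a b = C b a) :
    wmean S Z (fun i => wmean S Z (fun j => w i j *
      (C i j - wmean S Z (C i) - wmean S Z (fun a => C a j)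
        + wmean S Z (fun a => wmean S Z (C a)))))
      = wmean S Z (fun i => wmean S Z (fun j => w i j * C i j)
          - 2 * wmean S Z (C i) * wmean S Z (w i)
          + wmean S Z (C i) * wmean S Z (fun a => wmean S Z (w a))) := by
  have hCcol : ∀ j, wmean S Z (fun a => C a j) = wmean S Z (C j) := fun j => by
    simp only [hC _ j]
  have hwcol : ∀ j, wmean S Z (fun a => w a j) = wmean S Z (w j) := fun j => by
    simp only [hw _ j]
  have hswap : wmean S Z (fun i => wmean S Z (fun j => w i j * wmean S Z (C j)))
      = wmean S Z (fun i => wmean S Z (w i) * wmean S Z (C i)) := by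
    rw [wmean_comm]
    simp only [wmean_mul_right, hwcol]
  simp only [hCcol, mul_add, mul_sub, wmean_add, wmean_sub, wmean_mul_right, hswap, mul_assoc,
    wmean_mul_left, mul_comm (wmean S Z (w _))]
  ring

lemma sub_wmean_const_add_sum (hS : ∑ a ∈ S, Z a ≠ 0) (m : V) (s : Finset β) (y : α → β → V)
    (i : α) :
    (m + ∑ u ∈ s, y i u) - wmean S Z (fun a => m + ∑ u ∈ s, y a u)
      = ∑ u ∈ s, (y i u - wmean S Z (fun a => y a u)) := by
  rw [wmean_add, wmean_const hS, wmean_sum, sum_sub_distrib]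
  abel

lemma finsum_mul_eq_wmean (hZ : Function.support Z ⊆ S) (hS : ∑ a ∈ S, Z a ≠ 0)
    (f : α → 𝕜) : ∑ᶠ a, Z a * f a = (∑ a ∈ S, Z a) * wmean S Z f := by
  rw [finsum_eq_sum_of_support_subset _ ((Function.support_mul_subset_left _ _).trans hZ),
    wmean, smul_eq_mul, mul_inv_cancel_left₀ hS]
  simp only [smul_eq_mul]

lemma finsum_finsum_mul_eq_wmean (hZ : Function.support Z ⊆ S) (hS : ∑ a ∈ S, Z a ≠ 0)
    (F : α → α → 𝕜) :
    ∑ᶠ i, ∑ᶠ j, Z i * Z j * F i j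
      = (∑ a ∈ S, Z a) ^ 2 * wmean S Z (fun i => wmean S Z (F i)) := by
  have hinner : ∀ i, ∑ᶠ j, Z i * Z j * F i j = Z i * ((∑ a ∈ S, Z a) * wmean S Z (F i)) := by
    intro i
    simp only [mul_left_comm (Z i), mul_assoc, finsum_mul_eq_wmean hZ hS, wmean_mul_left]
  simp only [hinner, finsum_mul_eq_wmean hZ hS, wmean_mul_left]
  ring

lemma LinearMap.map_finsum_finsum_mul {Ω : Type*} (E : (Ω → 𝕜) →ₗ[𝕜] 𝕜)
    (hZ : Function.support Z ⊆ S) (hS : ∑ a ∈ S, Z a ≠ 0) (w : α → α → 𝕜) (x : α → Ω → 𝕜)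
    (m : Ω → 𝕜) :
    E (fun ω => ∑ᶠ i, ∑ᶠ j, Z i * Z j * w i j * ((x i ω - m ω) * (x j ω - m ω)))
      = (∑ a ∈ S, Z a) ^ 2 * wmean S Z (fun i => wmean S Z (fun j =>
          w i j * E ((x i - m) * (x j - m)))) := by
  have hfun : (fun ω => ∑ᶠ i, ∑ᶠ j, Z i * Z j * w i j * ((x i ω - m ω) * (x j ω - m ω)))
      = (∑ a ∈ S, Z a) ^ 2 • wmean S Z (fun i => wmean S Z (fun j =>
          w i j • ((x i - m) * (x j - m)))) := by
    funext ω
    simp only [mul_assoc (Z _ * Z _), finsum_finsum_mul_eq_wmean hZ hS, Pi.smul_apply,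
      wmean_apply, smul_eq_mul, Pi.mul_apply, Pi.sub_apply]
  simp only [hfun, map_smul, E.map_wmean, smul_eq_mul]

lemma LinearMap.map_sub_wmean_mul_sub_wmean {Ω : Type*} [DecidableEq β] (E : (Ω → 𝕜) →ₗ[𝕜] 𝕜)
    (hS : ∑ a ∈ S, Z a ≠ 0) (m : Ω → 𝕜) (U : Finset β) (y : α → β → Ω → 𝕜)
    (x : α → Ω → 𝕜) (hx : ∀ a, x a = m + ∑ u ∈ U, y a u) (K : β → α → α → 𝕜)
    (hy : ∀ u ∈ U, ∀ u' ∈ U, ∀ a b, E (y a u * y b u') = if u = u' then K u a b else 0)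
    (i j : α) :
    E ((x i - wmean S Z x) * (x j - wmean S Z x))
      = ∑ u ∈ U, (K u i j - wmean S Z (K u i) - wmean S Z (fun a => K u a j)
          + wmean S Z (fun a => wmean S Z (K u a))) := by
  let B := (LinearMap.mul 𝕜 (Ω → 𝕜)).compr₂ E
  have hdev : ∀ i, x i - wmean S Z x = ∑ u ∈ U, (y i u - wmean S Z (fun a => y a u)) := by
    intro i
    rw [show x = fun a => m + ∑ u ∈ U, y a u from funext hx]
    exact sub_wmean_const_add_sum hS _ _ _ i
  have hcross : ∀ u ∈ U, ∀ u' ∈ U,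
      B (y i u - wmean S Z (fun a => y a u)) (y j u' - wmean S Z (fun b => y b u'))
        = if u = u' then K u i j - wmean S Z (K u i) - wmean S Z (fun a => K u a j)
            + wmean S Z (fun a => wmean S Z (K u a)) else 0 := by
    intro u hu u' hu'
    rw [B.map_sub_wmean₂ (fun a => y a u) (fun b => y b u') i j]
    simp only [B, LinearMap.compr₂_apply, LinearMap.mul_apply', hy u hu u' hu']
    split_ifs <;> simp [wmean_zero]
  change B _ _ = _
  simp only [hdev, map_sum, LinearMap.sum_apply]
  refine sum_congr rfl fun u' hu' => ?_
  rw [sum_congr rfl fun u hu => hcross u hu u' hu', sum_ite_eq', if_pos hu']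

lemma mul_ite_comm_of_symm {σ : α → 𝕜} {R : α → α → Prop} [DecidableRel R]
    (hR : ∀ a b, R a b → R b a) (hσ : ∀ a b, R a b → σ a = σ b) (a b : α) :
    σ a * (if R a b then 1 else 0) = σ b * (if R b a then 1 else 0) := by
  by_cases h : R a b
  · rw [if_pos h, if_pos (hR a b h), hσ a b h]
  · rw [if_neg h, if_neg fun h' => h (hR b a h'), mul_zero, mul_zero]

lemma wmean_wmean_pow_mul_centered_kernel (t : 𝕜) {n : ℕ} (c : α → α → ℕ)
    (hc_symm : ∀ a b, c a b = c b a) (hc_le : ∀ a b, c a b ≤ n) (σ : α → 𝕜)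
    (R : α → α → Prop) [DecidableRel R] (hR : ∀ a b, R a b → R b a)
    (hσ : ∀ a b, R a b → σ a = σ b) :
    wmean S Z (fun i => wmean S Z (fun j => t ^ c i j *
      (σ i * (if R i j then 1 else 0) - wmean S Z (fun b => σ i * if R i b then 1 else 0)
        - wmean S Z (fun a => σ a * if R a j then 1 else 0)
        + wmean S Z (fun a => wmean S Z (fun b => σ a * if R a b then 1 else 0)))))
      = wmean S Z (fun i => (∑ k ∈ range (n + 1), t ^ k *
          (wmean S Z (fun j => if c i j = k ∧ R i j then 1 else 0)
            - 2 * wmean S Z (fun j => if c i j = k then 1 else 0)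
              * wmean S Z (fun j => if R i j then 1 else 0)
            + wmean S Z (fun a => wmean S Z (fun j => if c a j = k then 1 else 0))
              * wmean S Z (fun j => if R i j then 1 else 0))) * σ i) := by
  rw [wmean_wmean_mul_centered _ _ (fun a b => by rw [hc_symm]) (mul_ite_comm_of_symm hR hσ)]
  have hw : ∀ i, wmean S Z (fun j => t ^ c i j)
      = ∑ k ∈ range (n + 1), t ^ k * wmean S Z (fun j => if c i j = k then 1 else 0) :=
    fun i => by simpa only [mul_one] using wmean_pow_mul t (c i) (hc_le i) (fun _ => 1)
  have hwK : ∀ i, wmean S Z (fun j => t ^ c i j * (σ i * if R i j then 1 else 0))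
      = σ i * ∑ k ∈ range (n + 1),
          t ^ k * wmean S Z (fun j => if c i j = k ∧ R i j then 1 else 0) := fun i => by
    simp only [mul_left_comm _ (σ i), wmean_mul_left, wmean_pow_mul t (c i) (hc_le i), ← ite_and]
  congr 1
  funext i
  simp only [hw, hwK, wmean_mul_left, wmean_sum]
  rw [sum_mul, mul_sum, mul_sum, mul_sum, ← sum_sub_distrib, ← sum_add_distrib]
  exact sum_congr rfl fun k _ => by ring

end WeightedMean

theorem stmt18_general {r : ℕ} {Ω : Type*}
    (E : (Ω → ℝ) →ₗ[ℝ] ℝ)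
    (Z : (Fin r → ℕ) → ℝ)
    (hZfin : (Function.support Z).Finite)
    (N : ℝ) (hN : N = ∑ᶠ i, Z i) (hNpos : 0 < N)
    (μ : ℝ) (σ2 : (Fin r → ℕ) → Finset (Fin r) → ℝ) (τ2 : ℝ)
    (ε : (Fin r → ℕ) → Finset (Fin r) → Ω → ℝ)
    (hσdep : ∀ i i' u, (∀ j ∈ u, i j = i' j) → σ2 i u = σ2 i' u)
    (hcov : ∀ i i' u u', u.Nonempty → u'.Nonempty →
      E (fun ω => ε i u ω * ε i' u' ω)
        = σ2 i u * (if u = u' ∧ ∀ j ∈ u, i j = i' j then (1 : ℝ) else 0))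
    (X : (Fin r → ℕ) → Ω → ℝ)
    (hX : ∀ i ω, X i ω = μ + ∑ u ∈ Finset.univ.erase (∅ : Finset (Fin r)), ε i u ω)
    (Xbar : Ω → ℝ)
    (hXbar : ∀ ω, Xbar ω = (1 / N) * ∑ᶠ i, Z i * X i ω)
    (νiu : (Fin r → ℕ) → Finset (Fin r) → ℝ)
    (hνiu : ∀ i u, νiu i u
      = (1 / N) * ∑ᶠ i', Z i' * (if ∀ j ∈ u, i j = i' j then (1 : ℝ) else 0))
    (νik : (Fin r → ℕ) → ℕ → ℝ)
    (hνik : ∀ i k, νik i k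
      = (1 / N) * ∑ᶠ i', Z i' *
          (if (Finset.univ.filter (fun j => i j = i' j)).card = k then (1 : ℝ) else 0))
    (νiku : (Fin r → ℕ) → ℕ → Finset (Fin r) → ℝ)
    (hνiku : ∀ i k u, νiku i k u
      = (1 / N) * ∑ᶠ i', Z i' *
          (if (Finset.univ.filter (fun j => i j = i' j)).card = k ∧ ∀ j ∈ u, i j = i' j
            then (1 : ℝ) else 0))
    (νkbar : ℕ → ℝ)
    (hνkbar : ∀ k, νkbar k = (1 / N) * ∑ᶠ i, Z i * νik i k)
    (γi : (Fin r → ℕ) → Finset (Fin r) → ℝ)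
    (hγi : ∀ i u, γi i u = ∑ k ∈ Finset.range (r + 1),
      (1 + τ2) ^ k * (νiku i k u - 2 * νik i k * νiu i u + νkbar k * νiu i u)) :
    (1 / N ^ 2) * E (fun ω => ∑ᶠ i, ∑ᶠ i', Z i * Z i' *
        (1 + τ2) ^ (Finset.univ.filter (fun j => i j = i' j)).card *
        ((X i ω - Xbar ω) * (X i' ω - Xbar ω)))
      = (1 / N) * ∑ u ∈ Finset.univ.erase (∅ : Finset (Fin r)),
          ∑ᶠ i, Z i * (γi i u * σ2 i u) := by
  set S := hZfin.toFinset
  set U := Finset.univ.erase (∅ : Finset (Fin r))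
  have hZS : Function.support Z ⊆ S := hZfin.coe_toFinset.ge
  have hNS : N = ∑ a ∈ S, Z a := hN.trans (finsum_eq_sum_of_support_subset _ hZS)
  have hN0 : ∑ a ∈ S, Z a ≠ 0 := hNS ▸ hNpos.ne'
  have hmean : ∀ f, 1 / N * ∑ᶠ a, Z a * f a = wmean S Z f := fun f => by
    rw [finsum_mul_eq_wmean hZS hN0, hNS, one_div, inv_mul_cancel_left₀ hN0]
  simp only [hmean] at hXbar hνiu hνik hνiku hνkbar
  have hXbar' : Xbar = wmean S Z X := funext fun ω => by rw [hXbar, wmean_apply]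
  have hX' : ∀ i, X i = (fun _ => μ) + ∑ u ∈ U, ε i u := fun i => by
    ext ω
    simp [hX, Finset.sum_apply]
  have hε : ∀ u ∈ U, ∀ u' ∈ U, ∀ a b, E (ε a u * ε b u')
      = if u = u' then σ2 a u * (if ∀ j ∈ u, a j = b j then 1 else 0) else 0 := by
    intro u hu u' hu' a b
    have hne : ∀ v ∈ U, v.Nonempty := fun v hv => nonempty_iff_ne_empty.mpr (ne_of_mem_erase hv)
    change E (fun ω => ε a u ω * ε b u' ω) = _
    rw [hcov a b u u' (hne u hu) (hne u' hu')]
    by_cases h : u = u' <;> simp [h]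
  rw [E.map_finsum_finsum_mul hZS hN0, ← hNS, ← mul_assoc,
    one_div_mul_cancel (pow_ne_zero 2 hNpos.ne'), one_mul, mul_sum, hXbar']
  simp only [E.map_sub_wmean_mul_sub_wmean hN0 _ U _ X hX' _ hε, mul_sum, wmean_sum, hmean]
  refine sum_congr rfl fun u _ => ?_
  rw [wmean_wmean_pow_mul_centered_kernel (1 + τ2) (n := r) _ (fun a b => by simp_rw [eq_comm])
    (fun a b => (card_filter_le _ _).trans (by simp)) (fun a => σ2 a u)
    (fun a b => ∀ j ∈ u, a j = b j) (fun a b h j hj => (h j hj).symm) (fun a b => hσdep a b u)]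
  simp only [hγi, hνiku, hνik, hνiu, hνkbar]

/-- Theorem 8 (heteroscedastic, product weights):
`E_RE(Ṽar_PW(X̄*)) = (1/N) ∑_{u≠∅} ∑_i γ_{i,u} σ²_{i,u}` (sum over observed `i`),
with `γ_{i,u} = ∑_{k=0}^r (1+τ²)^k (ν_{i,k,u} − 2ν_{i,k}ν_{i,u} + ν̄_k ν_{i,u})`. -/
theorem stmt18 {r : ℕ} (hr : 1 ≤ r) {Ω : Type*}
    (E : (Ω → ℝ) →ₗ[ℝ] ℝ) (hE1 : E (fun _ => 1) = 1)
    (Z : (Fin r → ℕ) → ℝ)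
    (hZ01 : ∀ i, Z i = 0 ∨ Z i = 1)
    (hZfin : (Function.support Z).Finite)
    (N : ℝ) (hN : N = ∑ᶠ i, Z i) (hNpos : 0 < N)
    (μ : ℝ) (σ2 : (Fin r → ℕ) → Finset (Fin r) → ℝ) (τ2 : ℝ)
    (ε : (Fin r → ℕ) → Finset (Fin r) → Ω → ℝ)
    (hdep : ∀ i i' u, (∀ j ∈ u, i j = i' j) → ε i u = ε i' u)
    (hσdep : ∀ i i' u, (∀ j ∈ u, i j = i' j) → σ2 i u = σ2 i' u)
    (hmean : ∀ i u, u.Nonempty → E (ε i u) = 0)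
    (hcov : ∀ i i' u u', u.Nonempty → u'.Nonempty →
      E (fun ω => ε i u ω * ε i' u' ω)
        = σ2 i u * (if u = u' ∧ ∀ j ∈ u, i j = i' j then (1 : ℝ) else 0))
    (X : (Fin r → ℕ) → Ω → ℝ)
    (hX : ∀ i ω, X i ω = μ + ∑ u ∈ Finset.univ.erase (∅ : Finset (Fin r)), ε i u ω)
    (Xbar : Ω → ℝ)
    (hXbar : ∀ ω, Xbar ω = (1 / N) * ∑ᶠ i, Z i * X i ω)
    (νiu : (Fin r → ℕ) → Finset (Fin r) → ℝ)
    (hνiu : ∀ i u, νiu i u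
      = (1 / N) * ∑ᶠ i', Z i' * (if ∀ j ∈ u, i j = i' j then (1 : ℝ) else 0))
    (νik : (Fin r → ℕ) → ℕ → ℝ)
    (hνik : ∀ i k, νik i k
      = (1 / N) * ∑ᶠ i', Z i' *
          (if (Finset.univ.filter (fun j => i j = i' j)).card = k then (1 : ℝ) else 0))
    (νiku : (Fin r → ℕ) → ℕ → Finset (Fin r) → ℝ)
    (hνiku : ∀ i k u, νiku i k u
      = (1 / N) * ∑ᶠ i', Z i' *
          (if (Finset.univ.filter (fun j => i j = i' j)).card = k ∧ ∀ j ∈ u, i j = i' j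
            then (1 : ℝ) else 0))
    (νkbar : ℕ → ℝ)
    (hνkbar : ∀ k, νkbar k = (1 / N) * ∑ᶠ i, Z i * νik i k)
    (γi : (Fin r → ℕ) → Finset (Fin r) → ℝ)
    (hγi : ∀ i u, γi i u = ∑ k ∈ Finset.range (r + 1),
      (1 + τ2) ^ k * (νiku i k u - 2 * νik i k * νiu i u + νkbar k * νiu i u)) :
    (1 / N ^ 2) * E (fun ω => ∑ᶠ i, ∑ᶠ i', Z i * Z i' *
        (1 + τ2) ^ (Finset.univ.filter (fun j => i j = i' j)).card *
        ((X i ω - Xbar ω) * (X i' ω - Xbar ω)))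
      = (1 / N) * ∑ u ∈ Finset.univ.erase (∅ : Finset (Fin r)),
          ∑ᶠ i, Z i * (γi i u * σ2 i u) :=
  stmt18_general E Z hZfin N hN hNpos μ σ2 τ2 ε hσdep hcov X hX Xbar hXbar νiu hνiu νik hνik νiku
    hνiku νkbar hνkbar γi hγi
end
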